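/- arXiv:1505.00232 — 6 statements merged into one kernel-verified Lean document; each statement's English description precedes it below -/
import Mathlib

section
/- Let 1 < q ≤ 2, p = q/(q−1), and γ > 0. Let X be a real Banach space whose modulus of smoothness satisfies ρ(u) ≤ γ u^q for all u ≥ 0, let D be a dictionary in X, let (t_n)_{n≥1} be a weakness sequence, (δ_n)_{n≥0} a perturbation sequence, and (η_n)_{n≥1} a bounded error sequence. Suppose there exists a strictly increasing sequence of indices (n_k)_{k≥1} such that ∑_{k=1}^∞ t_{n_k+1}^p = ∞, δ_{n_k} = o(t_{n_k+1}^p) as k → ∞, and η_{n_k} = o(t_{n_k+1}^p) as k → ∞. Then for every f ∈ X and every realization of the AWCGA of f with these sequences, ‖f_n‖ → 0. -/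
open Filter

noncomputable section

variable {X : Type} [NormedAddCommGroup X] [NormedSpace ℝ X]

/-- A dictionary: a symmetric set of unit-norm elements with dense linear span. -/
def IsDictionary (D : Set X) : Prop :=
  (∀ g ∈ D, ‖g‖ = 1) ∧ (∀ g ∈ D, -g ∈ D) ∧
    (Submodule.span ℝ D).topologicalClosure = ⊤

/-- The modulus of smoothness of `X`:
`ρ(u) = sup_{‖x‖=‖y‖=1} (‖x+uy‖+‖x-uy‖)/2 - 1`. -/
def modulusOfSmoothness (X : Type) [NormedAddCommGroup X] [NormedSpace ℝ X]
    (u : ℝ) : ℝ :=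
  sSup {r : ℝ | ∃ x y : X, ‖x‖ = 1 ∧ ‖y‖ = 1 ∧ r = (‖x + u • y‖ + ‖x - u • y‖) / 2 - 1}

/-- A weakness sequence: `0 ≤ t n ≤ 1` for `n ≥ 1`. -/
def IsWeaknessSeq (t : ℕ → ℝ) : Prop := ∀ n, 1 ≤ n → 0 ≤ t n ∧ t n ≤ 1

/-- A perturbation sequence: `0 ≤ δ n ≤ 1` for `n ≥ 0`. -/
def IsPerturbationSeq (δ : ℕ → ℝ) : Prop := ∀ n, 0 ≤ δ n ∧ δ n ≤ 1

/-- An error sequence: `η n ≥ 0` for `n ≥ 1`. -/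
def IsErrorSeq (η : ℕ → ℝ) : Prop := ∀ n, 1 ≤ n → 0 ≤ η n

/-- `a k = o(b k)` as `k → ∞`: for every `ε > 0` eventually `a k ≤ ε * b k`. -/
def IsLittleO (a b : ℕ → ℝ) : Prop := ∀ ε : ℝ, 0 < ε → ∃ N, ∀ k, N ≤ k → a k ≤ ε * b k

/-- `E_n`: the best approximation error of `f` from `Φ_n = span{φ_1, …, φ_n}`. -/
def approxError (f : X) (φ : ℕ → X) (n : ℕ) : ℝ :=
  sInf ((fun g => ‖f - g‖) '' (Submodule.span ℝ (φ '' Set.Icc 1 n) : Set X))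

/-- A realization of the AWCGA of `f` with respect to a dictionary `D`,
a weakness sequence `t`, a perturbation sequence `δ` and an error sequence `η`.
Indices are shifted so that step `n ≥ 1` of the algorithm is encoded by
the fields applied at `n - 1` (for `F`) and at `n` (for `φ`, `G`, `fs`). -/
structure AWCGARealization (D : Set X) (f : X) (t δ η : ℕ → ℝ) where
  F : ℕ → (X →L[ℝ] ℝ)
  φ : ℕ → X
  G : ℕ → X
  fs : ℕ → X
  fs_zero : fs 0 = f
  F_norm : ∀ n : ℕ, ‖F n‖ ≤ 1
  F_norming : ∀ n : ℕ, F n (fs n) ≥ (1 - δ n) * ‖fs n‖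
  φ_mem : ∀ n : ℕ, φ (n + 1) ∈ D
  φ_greedy : ∀ n : ℕ, F n (φ (n + 1)) ≥ t (n + 1) * sSup ((fun g => F n g) '' D)
  G_mem : ∀ n : ℕ, G (n + 1) ∈ Submodule.span ℝ (φ '' Set.Icc 1 (n + 1))
  G_near : ∀ n : ℕ, ‖f - G (n + 1)‖ ≤ (1 + η (n + 1)) * approxError f φ (n + 1)
  fs_succ : ∀ n : ℕ, fs (n + 1) = f - G (n + 1)

/-!
Write `E m` for the best approximation error of `f` from `span {φ₁, …, φₘ}`; it is
antitone, so it suffices to rule out `E m ≥ E₀ > 0` for all `m`. Under that assumption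
the smoothness bound `‖x + y‖ + ‖x - y‖ ≤ 2‖x‖(1 + γ (‖y‖/‖x‖)^q)`, tested against the
approximately norming functional `F_m`, shows two things along the steps where `δ_m` and
`η_m` are small. First, `F_m (G_m)` is almost nonnegative (otherwise moving further along
`G_m` would beat the near-best approximant), so `F_m` is bounded below on an element of
`span D` close to `f`, and hence `sup_D F_m ≥ σ > 0`. Second, stepping from `f_m` along
`φ_{m+1}` by `c t_{m+1}^{p-1} ‖f_m‖` decreases the error by a fixed multiple of
`t_{m+1}^p`. Summing along `n_k` makes `∑ t_{n_k+1}^p` finite, a contradiction.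
-/

open Topology

lemma le_modulusOfSmoothness {x y : X} (hx : ‖x‖ = 1) (hy : ‖y‖ = 1) (u : ℝ) :
    (‖x + u • y‖ + ‖x - u • y‖) / 2 - 1 ≤ modulusOfSmoothness X u := by
  refine le_csSup ⟨|u|, ?_⟩ ⟨x, y, hx, hy, rfl⟩
  rintro r ⟨x', y', hx', hy', rfl⟩
  have hu : ‖u • y'‖ = |u| := by rw [norm_smul, hy', Real.norm_eq_abs, mul_one]
  linarith [norm_add_le x' (u • y'), norm_sub_le x' (u • y')]

lemma norm_add_add_norm_sub_le_modulusOfSmoothness {x y : X} (hx : x ≠ 0) (hy : y ≠ 0) :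
    ‖x + y‖ + ‖x - y‖ ≤ 2 * ‖x‖ * (1 + modulusOfSmoothness X (‖y‖ / ‖x‖)) := by
  have hx0 : 0 < ‖x‖ := norm_pos_iff.2 hx
  have hy0 : 0 < ‖y‖ := norm_pos_iff.2 hy
  set x' := ‖x‖⁻¹ • x
  set y' := ‖y‖⁻¹ • y
  set u := ‖y‖ / ‖x‖
  have hxx : ‖x‖ * ‖x‖⁻¹ = 1 := mul_inv_cancel₀ hx0.ne'
  have hxy : ‖x‖ * (u * ‖y‖⁻¹) = 1 := by
    simp only [u]
    field_simp
  have hadd : x + y = ‖x‖ • (x' + u • y') := by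
    simp only [x', y', smul_add, smul_smul, hxx, hxy, one_smul]
  have hsub : x - y = ‖x‖ • (x' - u • y') := by
    simp only [x', y', smul_sub, smul_smul, hxx, hxy, one_smul]
  have hx' : ‖x'‖ = 1 := norm_smul_inv_norm hx
  have hy' : ‖y'‖ = 1 := norm_smul_inv_norm hy
  have key := le_modulusOfSmoothness hx' hy' u
  rw [hadd, hsub, norm_smul, norm_smul, norm_norm, ← mul_add]
  calc ‖x‖ * (‖x' + u • y'‖ + ‖x' - u • y'‖)
      ≤ ‖x‖ * (2 * (1 + modulusOfSmoothness X u)) := by gcongr; linarith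
    _ = 2 * ‖x‖ * (1 + modulusOfSmoothness X u) := by ring

lemma apply_le_norm_of_norm_le_one {F : X →L[ℝ] ℝ} (hF : ‖F‖ ≤ 1) (x : X) : F x ≤ ‖x‖ :=
  (le_abs_self _).trans (by simpa using F.le_of_opNorm_le hF x)

lemma norm_sub_le_of_modulusOfSmoothness_le {q γ : ℝ} (hq : 0 < q)
    (hρ : ∀ u : ℝ, 0 ≤ u → modulusOfSmoothness X u ≤ γ * u ^ q)
    {F : X →L[ℝ] ℝ} (hF : ‖F‖ ≤ 1) {x : X} (hx : x ≠ 0) (y : X) :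
    ‖x - y‖ ≤ 2 * ‖x‖ + 2 * γ * ‖x‖ * (‖y‖ / ‖x‖) ^ q - F x - F y := by
  have hxy : F x + F y ≤ ‖x + y‖ := by
    rw [← map_add]
    exact apply_le_norm_of_norm_le_one hF _
  rcases eq_or_ne y 0 with rfl | hy
  · simp only [sub_zero, norm_zero, zero_div, Real.zero_rpow hq.ne', mul_zero, add_zero,
      map_zero]
    linarith [apply_le_norm_of_norm_le_one hF x]
  · have hsmooth := norm_add_add_norm_sub_le_modulusOfSmoothness hx hy
    have hρy : 2 * ‖x‖ * (1 + modulusOfSmoothness X (‖y‖ / ‖x‖)) ≤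
        2 * ‖x‖ * (1 + γ * (‖y‖ / ‖x‖) ^ q) := by
      gcongr
      exact hρ _ (by positivity)
    linarith

lemma exists_pos_mul_rpow_le {q K M : ℝ} (hq : 1 < q) (hK : 0 < K) (hM : 0 < M) :
    ∃ c > 0, K * c ^ q ≤ M * c := by
  set c := (M / K) ^ (q - 1)⁻¹
  have hc : 0 < c := by positivity
  have hcq : c ^ (q - 1) = M / K := by
    rw [← Real.rpow_mul (by positivity), inv_mul_cancel₀ (by linarith), Real.rpow_one]
  refine ⟨c, hc, le_of_eq ?_⟩
  rw [Real.rpow_sub_one hc.ne'] at hcq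
  field_simp at hcq ⊢
  linarith

lemma one_lt_conj_exponent {p q : ℝ} (hq : 1 < q) (hp : p = q / (q - 1)) : 1 < p := by
  rw [hp, lt_div_iff₀ (by linarith)]
  linarith

lemma sub_one_mul_conj_exponent {p q : ℝ} (hq : 1 < q) (hp : p = q / (q - 1)) :
    (p - 1) * q = p := by
  have : q - 1 ≠ 0 := by linarith
  rw [hp]
  field_simp
  ring

section Dictionary

variable {D : Set X}

lemma abs_apply_le_sSup_image (hDu : ∀ g ∈ D, ‖g‖ = 1) (hDs : ∀ g ∈ D, -g ∈ D)
    (F : X →L[ℝ] ℝ) {g : X} (hg : g ∈ D) : |F g| ≤ sSup (F '' D) := by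
  have hbdd : BddAbove (F '' D) := by
    refine ⟨‖F‖, ?_⟩
    rintro _ ⟨h, hh, rfl⟩
    simpa [hDu h hh] using (le_abs_self _).trans (F.le_opNorm h)
  have hneg := le_csSup hbdd ⟨-g, hDs g hg, rfl⟩
  rw [map_neg] at hneg
  exact abs_le.2 ⟨by linarith, le_csSup hbdd ⟨g, hg, rfl⟩⟩

lemma sSup_image_nonneg (hDu : ∀ g ∈ D, ‖g‖ = 1) (hDs : ∀ g ∈ D, -g ∈ D)
    (F : X →L[ℝ] ℝ) : 0 ≤ sSup (F '' D) := by
  rcases D.eq_empty_or_nonempty with rfl | ⟨g, hg⟩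
  · simp
  · exact (abs_nonneg _).trans (abs_apply_le_sSup_image hDu hDs F hg)

lemma exists_abs_apply_le_mul_sSup_image (hDu : ∀ g ∈ D, ‖g‖ = 1) (hDs : ∀ g ∈ D, -g ∈ D)
    {v : X} (hv : v ∈ Submodule.span ℝ D) :
    ∃ A > 0, ∀ F : X →L[ℝ] ℝ, |F v| ≤ A * sSup (F '' D) := by
  induction hv using Submodule.span_induction with
  | mem g hg => exact ⟨1, one_pos, fun F => by simpa using abs_apply_le_sSup_image hDu hDs F hg⟩
  | zero => exact ⟨1, one_pos, fun F => by simpa using sSup_image_nonneg hDu hDs F⟩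
  | add x y _ _ hx hy =>
    obtain ⟨A, hA, hAx⟩ := hx
    obtain ⟨B, hB, hBy⟩ := hy
    refine ⟨A + B, by positivity, fun F => ?_⟩
    rw [map_add, add_mul]
    exact (abs_add_le _ _).trans (add_le_add (hAx F) (hBy F))
  | smul c x _ hx =>
    obtain ⟨A, hA, hAx⟩ := hx
    refine ⟨(|c| + 1) * A, by positivity, fun F => ?_⟩
    rw [map_smul, smul_eq_mul, abs_mul, mul_assoc]
    exact mul_le_mul (by linarith) (hAx F) (abs_nonneg _) (by positivity)

end Dictionary

section ApproxError

variable {f : X} {φ : ℕ → X}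

lemma approxError_le {n : ℕ} {g : X} (hg : g ∈ Submodule.span ℝ (φ '' Set.Icc 1 n)) :
    approxError f φ n ≤ ‖f - g‖ :=
  csInf_le ⟨0, by rintro _ ⟨_, _, rfl⟩; positivity⟩ ⟨g, hg, rfl⟩

lemma approxError_nonneg (n : ℕ) : 0 ≤ approxError f φ n :=
  le_csInf ⟨_, 0, Submodule.zero_mem _, rfl⟩ (by rintro _ ⟨_, _, rfl⟩; positivity)

lemma approxError_le_norm (n : ℕ) : approxError f φ n ≤ ‖f‖ := by
  simpa using approxError_le (f := f) (Submodule.zero_mem (Submodule.span ℝ (φ '' Set.Icc 1 n)))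

lemma approxError_antitone : Antitone (approxError f φ) := fun _ _ hmn =>
  le_csInf ⟨_, 0, Submodule.zero_mem _, rfl⟩ fun _ ⟨_, hg, hr⟩ =>
    hr ▸ approxError_le (Submodule.span_mono (Set.image_mono (Set.Icc_subset_Icc_right hmn)) hg)

end ApproxError

lemma summable_of_antitone_of_le_sub {E : ℕ → ℝ} (hE : Antitone E) (hE0 : ∀ m, 0 ≤ E m)
    {n : ℕ → ℕ} (hn : StrictMono n) {b : ℕ → ℝ} (hb : ∀ k, 0 ≤ b k) {κ : ℝ} (hκ : 0 < κ)
    (hdec : ∀ᶠ k in atTop, E (n k + 1) ≤ E (n k) - κ * b k) : Summable b := by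
  obtain ⟨K, hK⟩ := eventually_atTop.1 hdec
  rw [← summable_nat_add_iff K]
  have hstep : ∀ k, κ * b (k + K) ≤ E (n (k + K)) - E (n (k + 1 + K)) := fun k => by
    have hnext : E (n (k + 1 + K)) ≤ E (n (k + K) + 1) := hE (hn (by omega))
    linarith [hK (k + K) (by omega)]
  refine summable_of_sum_range_le (fun k => hb _) (c := E (n K) / κ) fun N => ?_
  have htele := (Finset.sum_le_sum fun k _ => hstep k).trans_eq
    (Finset.sum_range_sub' (fun k => E (n (k + K))) N)
  rw [← Finset.mul_sum, zero_add] at htele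
  rw [le_div_iff₀' hκ]
  linarith [hE0 (n (N + K))]

namespace AWCGARealization

variable {D : Set X} {f : X} {t δ η : ℕ → ℝ} (r : AWCGARealization D f t δ η) {m : ℕ}

lemma fs_eq (hm : 1 ≤ m) : r.fs m = f - r.G m := by
  obtain ⟨j, rfl⟩ := Nat.exists_eq_add_of_le' hm
  exact r.fs_succ j

lemma G_mem_span (hm : 1 ≤ m) : r.G m ∈ Submodule.span ℝ (r.φ '' Set.Icc 1 m) := by
  obtain ⟨j, rfl⟩ := Nat.exists_eq_add_of_le' hm
  exact r.G_mem j

lemma norm_fs_le (hm : 1 ≤ m) : ‖r.fs m‖ ≤ (1 + η m) * approxError f r.φ m := by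
  obtain ⟨j, rfl⟩ := Nat.exists_eq_add_of_le' hm
  rw [r.fs_succ j]
  exact r.G_near j

lemma approxError_le_norm_fs_add_smul_G (hm : 1 ≤ m) (s : ℝ) :
    approxError f r.φ m ≤ ‖r.fs m + s • r.G m‖ := by
  have h : r.fs m + s • r.G m = f - (1 - s) • r.G m := by
    rw [r.fs_eq hm, sub_smul, one_smul]
    abel
  rw [h]
  exact approxError_le (Submodule.smul_mem _ _ (r.G_mem_span hm))

lemma approxError_le_norm_fs (hm : 1 ≤ m) : approxError f r.φ m ≤ ‖r.fs m‖ := by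
  simpa using r.approxError_le_norm_fs_add_smul_G hm 0

lemma approxError_succ_le_norm_fs_sub_smul_φ (hm : 1 ≤ m) (s : ℝ) :
    approxError f r.φ (m + 1) ≤ ‖r.fs m - s • r.φ (m + 1)‖ := by
  have h : r.fs m - s • r.φ (m + 1) = f - (r.G m + s • r.φ (m + 1)) := by
    rw [r.fs_eq hm]
    abel
  rw [h]
  refine approxError_le (Submodule.add_mem _ ?_ (Submodule.smul_mem _ _ ?_))
  · exact Submodule.span_mono (Set.image_mono (Set.Icc_subset_Icc_right (by omega)))
      (r.G_mem_span hm)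
  · exact Submodule.subset_span ⟨m + 1, ⟨by omega, le_rfl⟩, rfl⟩

lemma norm_fs_le_two_mul (hm : 1 ≤ m) (hηm : η m ≤ 1) : ‖r.fs m‖ ≤ 2 * ‖f‖ :=
  (r.norm_fs_le hm).trans <| mul_le_mul (by linarith) (approxError_le_norm m)
    (approxError_nonneg m) zero_le_two

lemma one_add_mul_norm_fs_le (hδ : IsPerturbationSeq δ) (hη : IsErrorSeq η) (hm : 1 ≤ m) :
    (1 + δ m) * ‖r.fs m‖ ≤ approxError f r.φ m + (δ m + 2 * η m) * ‖f‖ := by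
  obtain ⟨hδ0, hδ1⟩ := hδ m
  have hη0 := hη m hm
  have hE0 := approxError_nonneg (f := f) (φ := r.φ) m
  have hEf := approxError_le_norm (f := f) (φ := r.φ) m
  calc (1 + δ m) * ‖r.fs m‖ ≤ (1 + δ m) * ((1 + η m) * approxError f r.φ m) := by
        gcongr
        exact r.norm_fs_le hm
    _ ≤ approxError f r.φ m + (δ m + 2 * η m) * approxError f r.φ m := by
        nlinarith [mul_le_mul_of_nonneg_right hδ1 (mul_nonneg hη0 hE0)]
    _ ≤ approxError f r.φ m + (δ m + 2 * η m) * ‖f‖ := by gcongr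

lemma norm_fs_sub_le {q γ : ℝ} (hq : 0 < q)
    (hρ : ∀ u : ℝ, 0 ≤ u → modulusOfSmoothness X u ≤ γ * u ^ q) (hfs : r.fs m ≠ 0) (y : X) :
    ‖r.fs m - y‖ ≤
      (1 + δ m) * ‖r.fs m‖ + 2 * γ * ‖r.fs m‖ * (‖y‖ / ‖r.fs m‖) ^ q - r.F m y := by
  linarith [norm_sub_le_of_modulusOfSmoothness_le hq hρ (r.F_norm m) hfs y, r.F_norming m]

lemma exists_neg_le_apply_G {q γ E₀ : ℝ} (hq : 1 < q) (hγ : 0 < γ)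
    (hρ : ∀ u : ℝ, 0 ≤ u → modulusOfSmoothness X u ≤ γ * u ^ q)
    (hδ : IsPerturbationSeq δ) (hη : IsErrorSeq η) (hE₀ : 0 < E₀)
    (hE : ∀ m, E₀ ≤ approxError f r.φ m) :
    ∃ ε > 0, ∀ m, 1 ≤ m → δ m ≤ ε → η m ≤ ε → -(E₀ / 8) ≤ r.F m (r.G m) := by
  have hf : 0 < ‖f‖ := hE₀.trans_le ((hE 0).trans (approxError_le_norm 0))
  obtain ⟨l, hl, hlK⟩ := exists_pos_mul_rpow_le hq
    (K := 2 * γ * (2 * ‖f‖) * (3 * ‖f‖ / E₀) ^ q) (M := E₀ / 16) (by positivity) (by positivity)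
  refine ⟨min 1 (l * E₀ / (48 * ‖f‖)), by positivity, fun m hm hδm hηm => ?_⟩
  have ha : E₀ ≤ ‖r.fs m‖ := (hE m).trans (r.approxError_le_norm_fs hm)
  have ha2 : ‖r.fs m‖ ≤ 2 * ‖f‖ := r.norm_fs_le_two_mul hm (hηm.trans (min_le_left _ _))
  have hG : ‖r.G m‖ ≤ 3 * ‖f‖ := by
    rw [show r.G m = f - r.fs m by rw [r.fs_eq hm]; abel]
    linarith [norm_sub_le f (r.fs m)]
  have hpen : 2 * γ * ‖r.fs m‖ * (l * ‖r.G m‖ / ‖r.fs m‖) ^ q ≤ E₀ / 16 * l := by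
    refine le_trans ?_ hlK
    rw [mul_div_assoc, Real.mul_rpow hl.le (by positivity), mul_comm (l ^ q), ← mul_assoc]
    gcongr
  have hrem : (δ m + 2 * η m) * ‖f‖ ≤ l * E₀ / 16 := by
    calc (δ m + 2 * η m) * ‖f‖ ≤ 3 * (l * E₀ / (48 * ‖f‖)) * ‖f‖ := by
          gcongr
          linarith [hδm.trans (min_le_right _ _), hηm.trans (min_le_right _ _)]
      _ = l * E₀ / 16 := by field_simp; ring
  have hsmooth := r.norm_fs_sub_le (by linarith) hρ (norm_pos_iff.1 (hE₀.trans_le ha))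
    (-(l • r.G m))
  rw [sub_neg_eq_add, norm_neg, map_neg, map_smul, smul_eq_mul, norm_smul,
    Real.norm_of_nonneg hl.le] at hsmooth
  have hlow := r.approxError_le_norm_fs_add_smul_G hm l
  have hnorming := r.one_add_mul_norm_fs_le hδ hη hm
  have hlFG : l * -(E₀ / 8) ≤ l * r.F m (r.G m) := by linarith
  exact le_of_mul_le_mul_left hlFG hl

lemma exists_le_sSup_image {q γ E₀ : ℝ} (hq : 1 < q) (hγ : 0 < γ)
    (hρ : ∀ u : ℝ, 0 ≤ u → modulusOfSmoothness X u ≤ γ * u ^ q) (hD : IsDictionary D)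
    (hδ : IsPerturbationSeq δ) (hη : IsErrorSeq η) (hE₀ : 0 < E₀)
    (hE : ∀ m, E₀ ≤ approxError f r.φ m) :
    ∃ σ > 0, ∃ ε > 0, ∀ m, 1 ≤ m → δ m ≤ ε → η m ≤ ε → σ ≤ sSup (r.F m '' D) := by
  obtain ⟨hDu, hDs, hDspan⟩ := hD
  have hf : 0 < ‖f‖ := hE₀.trans_le ((hE 0).trans (approxError_le_norm 0))
  obtain ⟨v, hv, hfv⟩ : ∃ v ∈ Submodule.span ℝ D, ‖f - v‖ < E₀ / 8 := by
    have hfcl : f ∈ closure (Submodule.span ℝ D : Set X) := by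
      rw [← Submodule.topologicalClosure_coe, hDspan]
      trivial
    simpa [dist_eq_norm] using Metric.mem_closure_iff.1 hfcl (E₀ / 8) (by positivity)
  obtain ⟨A, hA, hAv⟩ := exists_abs_apply_le_mul_sSup_image hDu hDs hv
  obtain ⟨ε, hε, hFG⟩ := r.exists_neg_le_apply_G hq hγ hρ hδ hη hE₀ hE
  refine ⟨E₀ / (2 * A), by positivity, min ε (min 1 (E₀ / (16 * ‖f‖))), by positivity,
    fun m hm hδm hηm => ?_⟩
  simp only [le_min_iff] at hδm hηm
  have ha : E₀ ≤ ‖r.fs m‖ := (hE m).trans (r.approxError_le_norm_fs hm)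
  have hδa : δ m * ‖r.fs m‖ ≤ E₀ / 8 := by
    calc δ m * ‖r.fs m‖ ≤ E₀ / (16 * ‖f‖) * (2 * ‖f‖) :=
          mul_le_mul hδm.2.2 (r.norm_fs_le_two_mul hm hηm.2.1) (norm_nonneg _) (by positivity)
      _ = E₀ / 8 := by field_simp; ring
  have hFv : r.F m v = r.F m (r.fs m) + r.F m (r.G m) - r.F m (f - v) := by
    rw [← map_add, ← map_sub, r.fs_eq hm]
    abel_nf
  have hfv' := apply_le_norm_of_norm_le_one (r.F_norm m) (f - v)
  have hFvS := (le_abs_self _).trans (hAv (r.F m))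
  rw [div_le_iff₀ (by positivity)]
  linarith [r.F_norming m, hFG m hm hδm.1 hηm.1]

lemma approxError_succ_le {q p γ c : ℝ} (hq : 1 < q) (hp : p = q / (q - 1))
    (hρ : ∀ u : ℝ, 0 ≤ u → modulusOfSmoothness X u ≤ γ * u ^ q) (hDu : ∀ g ∈ D, ‖g‖ = 1)
    (hm : 1 ≤ m) (hfs : r.fs m ≠ 0) (hτ : 0 ≤ t (m + 1)) (hc : 0 ≤ c) :
    approxError f r.φ (m + 1) ≤ (1 + δ m) * ‖r.fs m‖ +
      (2 * γ * ‖r.fs m‖ * c ^ q - c * ‖r.fs m‖ * sSup (r.F m '' D)) * t (m + 1) ^ p := by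
  -- step from `f_m` along `φ_{m+1}` by `u ‖f_m‖`; as `(p - 1) q = p`, both `u t_{m+1}` and
  -- `u ^ q` are multiples of `t_{m+1} ^ p`
  set u := c * t (m + 1) ^ (p - 1)
  have hu : 0 ≤ u := by positivity
  have hut : u * t (m + 1) = c * t (m + 1) ^ p := by
    rw [mul_assoc, ← Real.rpow_add_one' hτ (by linarith [one_lt_conj_exponent hq hp]),
      sub_add_cancel]
  have huq : u ^ q = c ^ q * t (m + 1) ^ p := by
    rw [Real.mul_rpow hc (by positivity), ← Real.rpow_mul hτ, sub_one_mul_conj_exponent hq hp]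
  have hy : ‖(u * ‖r.fs m‖) • r.φ (m + 1)‖ = u * ‖r.fs m‖ := by
    rw [norm_smul, hDu _ (r.φ_mem m), mul_one, Real.norm_of_nonneg (by positivity)]
  have hsmooth := r.norm_fs_sub_le (by linarith) hρ hfs ((u * ‖r.fs m‖) • r.φ (m + 1))
  rw [hy, mul_div_cancel_right₀ _ (norm_ne_zero_iff.2 hfs), map_smul, smul_eq_mul, huq]
    at hsmooth
  have hgreedy := mul_le_mul_of_nonneg_left (r.φ_greedy m) (by positivity : 0 ≤ u * ‖r.fs m‖)
  have hgain : u * ‖r.fs m‖ * (t (m + 1) * sSup (r.F m '' D)) =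
      c * ‖r.fs m‖ * sSup (r.F m '' D) * t (m + 1) ^ p := by
    linear_combination (‖r.fs m‖ * sSup (r.F m '' D)) * hut
  linarith [r.approxError_succ_le_norm_fs_sub_smul_φ hm (u * ‖r.fs m‖)]

lemma exists_approxError_succ_le {q p γ E₀ : ℝ} (hq : 1 < q) (hp : p = q / (q - 1))
    (hγ : 0 < γ) (hρ : ∀ u : ℝ, 0 ≤ u → modulusOfSmoothness X u ≤ γ * u ^ q)
    (hD : IsDictionary D) (ht : IsWeaknessSeq t) (hδ : IsPerturbationSeq δ)
    (hη : IsErrorSeq η) (hE₀ : 0 < E₀) (hE : ∀ m, E₀ ≤ approxError f r.φ m) :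
    ∃ κ > 0, ∃ ε > 0, ∀ m, 1 ≤ m → δ m ≤ ε * t (m + 1) ^ p → η m ≤ ε * t (m + 1) ^ p →
      approxError f r.φ (m + 1) ≤ approxError f r.φ m - κ * t (m + 1) ^ p := by
  have hf : 0 < ‖f‖ := hE₀.trans_le ((hE 0).trans (approxError_le_norm 0))
  obtain ⟨σ, hσ, ε, hε, hS⟩ := r.exists_le_sSup_image hq hγ hρ hD hδ hη hE₀ hE
  obtain ⟨c, hc, hcK⟩ := exists_pos_mul_rpow_le hq (K := 2 * γ * (2 * ‖f‖)) (M := E₀ * σ / 2)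
    (by positivity) (by positivity)
  set κ := E₀ * σ * c / 4 with hκ
  set ε' := min ε (min 1 (κ / (3 * ‖f‖)))
  have hε'ε : ε' ≤ ε := min_le_left _ _
  have hε'1 : ε' ≤ 1 := (min_le_right _ _).trans (min_le_left _ _)
  have hε'κ : ε' ≤ κ / (3 * ‖f‖) := (min_le_right _ _).trans (min_le_right _ _)
  refine ⟨κ, by positivity, ε', by positivity, fun m hm hδm hηm => ?_⟩
  obtain ⟨hτ0, hτ1⟩ := ht (m + 1) (by omega)
  have hτp0 : 0 ≤ t (m + 1) ^ p := Real.rpow_nonneg hτ0 p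
  have hτp1 : t (m + 1) ^ p ≤ 1 :=
    Real.rpow_le_one hτ0 hτ1 (by linarith [one_lt_conj_exponent hq hp])
  have hδε : δ m ≤ ε' := hδm.trans (mul_le_of_le_one_right (by positivity) hτp1)
  have hηε : η m ≤ ε' := hηm.trans (mul_le_of_le_one_right (by positivity) hτp1)
  have ha : E₀ ≤ ‖r.fs m‖ := (hE m).trans (r.approxError_le_norm_fs hm)
  have ha2 : ‖r.fs m‖ ≤ 2 * ‖f‖ := r.norm_fs_le_two_mul hm (hηε.trans hε'1)
  have hcoef : 2 * γ * ‖r.fs m‖ * c ^ q - c * ‖r.fs m‖ * sSup (r.F m '' D) ≤ -(2 * κ) := by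
    have hpen : 2 * γ * ‖r.fs m‖ * c ^ q ≤ E₀ * σ / 2 * c :=
      le_trans (by gcongr) hcK
    have hgain : c * E₀ * σ ≤ c * ‖r.fs m‖ * sSup (r.F m '' D) := by
      gcongr
      exact hS m hm (hδε.trans hε'ε) (hηε.trans hε'ε)
    linarith
  have hrem : (δ m + 2 * η m) * ‖f‖ ≤ κ * t (m + 1) ^ p := by
    calc (δ m + 2 * η m) * ‖f‖ ≤ 3 * (κ / (3 * ‖f‖) * t (m + 1) ^ p) * ‖f‖ := by
          gcongr
          linarith [hδm.trans (mul_le_mul_of_nonneg_right hε'κ hτp0),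
            hηm.trans (mul_le_mul_of_nonneg_right hε'κ hτp0)]
      _ = κ * t (m + 1) ^ p := by field_simp
  have hstep := r.approxError_succ_le hq hp hρ hD.1 hm (norm_pos_iff.1 (hE₀.trans_le ha)) hτ0
    hc.le
  linarith [mul_le_mul_of_nonneg_right hcoef hτp0, r.one_add_mul_norm_fs_le hδ hη hm]

lemma tendsto_norm_fs {C : ℝ} (hC : ∀ m, 1 ≤ m → η m ≤ C)
    (hE : Tendsto (approxError f r.φ) atTop (𝓝 0)) : Tendsto (fun m => ‖r.fs m‖) atTop (𝓝 0) := by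
  refine squeeze_zero' (.of_forall fun _ => norm_nonneg _) ?_ (by simpa using hE.const_mul (1 + C))
  filter_upwards [eventually_ge_atTop 1] with m hm
  exact (r.norm_fs_le hm).trans (by gcongr; exacts [approxError_nonneg m, hC m hm])

end AWCGARealization

theorem stmt_0_general {X : Type} [NormedAddCommGroup X] [NormedSpace ℝ X]
    (q p γ : ℝ) (hq1 : 1 < q) (hp : p = q / (q - 1)) (hγ : 0 < γ)
    (hρ : ∀ u : ℝ, 0 ≤ u → modulusOfSmoothness X u ≤ γ * u ^ q)
    (D : Set X) (hD : IsDictionary D)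
    (t δ η : ℕ → ℝ) (ht : IsWeaknessSeq t) (hδ : IsPerturbationSeq δ)
    (hη : IsErrorSeq η) (hηbdd : ∃ C : ℝ, ∀ m, 1 ≤ m → η m ≤ C)
    (n : ℕ → ℕ) (hmono : StrictMono n) (hn1 : ∀ k, 1 ≤ n k)
    (hsum : ¬ Summable (fun k => t (n k + 1) ^ p))
    (hδo : IsLittleO (fun k => δ (n k)) (fun k => t (n k + 1) ^ p))
    (hηo : IsLittleO (fun k => η (n k)) (fun k => t (n k + 1) ^ p))
    (f : X) (r : AWCGARealization D f t δ η) :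
    Tendsto (fun m => ‖r.fs m‖) atTop (nhds 0) := by
  obtain ⟨C, hC⟩ := hηbdd
  refine r.tendsto_norm_fs hC ?_
  have hbdd : BddBelow (Set.range (approxError f r.φ)) :=
    ⟨0, by rintro _ ⟨m, rfl⟩; exact approxError_nonneg m⟩
  have hlim := tendsto_atTop_ciInf (approxError_antitone (f := f) (φ := r.φ)) hbdd
  obtain hzero | hpos := (le_ciInf fun m => approxError_nonneg (f := f) (φ := r.φ) m).eq_or_lt
  · rwa [← hzero] at hlim
  obtain ⟨κ, hκ, ε, hε, hdec⟩ :=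
    r.exists_approxError_succ_le hq1 hp hγ hρ hD ht hδ hη hpos (ciInf_le hbdd)
  obtain ⟨N₁, hN₁⟩ := hδo ε hε
  obtain ⟨N₂, hN₂⟩ := hηo ε hε
  refine absurd (summable_of_antitone_of_le_sub (approxError_antitone (f := f) (φ := r.φ))
    approxError_nonneg hmono
    (fun k => Real.rpow_nonneg (ht _ (by omega)).1 p) hκ ?_) hsum
  filter_upwards [eventually_ge_atTop (max N₁ N₂)] with k hk
  exact hdec (n k) (hn1 k) (hN₁ k (le_of_max_le_left hk)) (hN₂ k (le_of_max_le_right hk))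

/-- Sufficient conditions for convergence of the AWCGA (Theorem 1.3, sufficiency). -/
theorem stmt_0 {X : Type} [NormedAddCommGroup X] [NormedSpace ℝ X] [CompleteSpace X]
    (q p γ : ℝ) (hq1 : 1 < q) (hq2 : q ≤ 2) (hp : p = q / (q - 1)) (hγ : 0 < γ)
    (hρ : ∀ u : ℝ, 0 ≤ u → modulusOfSmoothness X u ≤ γ * u ^ q)
    (D : Set X) (hD : IsDictionary D)
    (t δ η : ℕ → ℝ) (ht : IsWeaknessSeq t) (hδ : IsPerturbationSeq δ)
    (hη : IsErrorSeq η) (hηbdd : ∃ C : ℝ, ∀ m, 1 ≤ m → η m ≤ C)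
    (n : ℕ → ℕ) (hmono : StrictMono n) (hn1 : ∀ k, 1 ≤ n k)
    (hsum : ¬ Summable (fun k => t (n k + 1) ^ p))
    (hδo : IsLittleO (fun k => δ (n k)) (fun k => t (n k + 1) ^ p))
    (hηo : IsLittleO (fun k => η (n k)) (fun k => t (n k + 1) ^ p))
    (f : X) (r : AWCGARealization D f t δ η) :
    Tendsto (fun m => ‖r.fs m‖) atTop (nhds 0) :=
  stmt_0_general q p γ hq1 hp hγ hρ D hD t δ η ht hδ hη hηbdd n hmono hn1 hsum hδo hηo f r
end
end

section
/- Let (t_n)_{n≥1} be a weakness sequence, (δ_n)_{n≥0} a perturbation sequence, and (η_n)_{n≥1} a bounded error sequence, and let 1 < q ≤ 2 and p = q/(q−1). Suppose that for every strictly increasing sequence of indices (n_k)_{k≥1} at least one of the following fails: ∑_{k=1}^∞ t_{n_k+1}^p = ∞, δ_{n_k} = o(t_{n_k+1}^p), η_{n_k} = o(t_{n_k+1}^p). Then in the real Banach space ℓ_q of q-summable real sequences there exist a dictionary D, an element f ∈ ℓ_q, and a realization of the AWCGA of f with these sequences such that ‖f_n‖ does not tend to 0. -/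
open Filter

noncomputable section

variable {X : Type} [NormedAddCommGroup X] [NormedSpace ℝ X]

/-- The space `ℓ_q` of `q`-summable real sequences. -/
abbrev ellq (q : ℝ) := lp (fun _ : ℕ => ℝ) (ENNReal.ofReal q)

/-!
Work in `ℓ_q` with the dictionary `{±e_j}` and put weight `w = N^{-1/q}` on `N` coordinates that
are never selected, so that every residual has norm at least `1`. A diagonal argument turns the
hypothesis into an `N` for which the tight steps, those with `δ_n` and `η_n` both below
`t_{n+1}^p / N`, satisfy `∑ t_{n+1}^p < ∞`. At a tight step the algorithm is handed a fresh
coordinate of size `t_{n+1}^{1/(q-1)} w`: the norming functional rates it exactly `t_{n+1}` times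
the top coordinates, and these coordinates are `q`-summable because the `t_{n+1}^p` are summable
over tight steps. Every other step re-selects a coordinate `e_N` already in the span. If
`δ_n ≥ t_{n+1}^p / N`, the functional is `1 - δ_n` times the norming one plus `t_{n+1} w^{q-1}` on
`e_N`; the two pieces have disjoint supports, so by Hölder its norm is
`((1 - δ_n)^p + t_{n+1}^p / N)^{1/p} ≤ 1`. Otherwise `η_n ≥ t_{n+1}^p / N`, and the approximant
leaves `t_{n+1}^{1/(q-1)} w` on `e_N`: this makes `e_N` a valid greedy choice and adds only
`t_{n+1}^p / N ≤ η_n` to the `q`-th power of the error.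
-/

open scoped ENNReal

namespace Real

theorem rpow_sub_one_mul_self {x r : ℝ} (hx : 0 ≤ x) (hr : r ≠ 0) :
    x ^ (r - 1) * x = x ^ r := by
  conv_rhs => rw [← sub_add_cancel r 1, rpow_add' hx (by simpa using hr), rpow_one]

theorem add_rpow_of_mul_eq_zero {a b r : ℝ} (hr : r ≠ 0) (hab : a * b = 0) :
    (a + b) ^ r = a ^ r + b ^ r := by
  rcases mul_eq_zero.mp hab with rfl | rfl
  · rw [zero_add, zero_rpow hr, zero_add]
  · rw [add_zero, zero_rpow hr, add_zero]

theorem rpow_inv_mul_rpow {s c r : ℝ} (hs : 0 ≤ s) (hc : 0 ≤ c) (hr : r ≠ 0) :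
    (s ^ r⁻¹ * c) ^ r = s * c ^ r := by
  rw [mul_rpow (rpow_nonneg hs _) hc, rpow_inv_rpow hs hr]

end Real

namespace lp

variable {α : Type*} {E : α → Type*} [∀ i, NormedAddCommGroup (E i)] {p : ℝ≥0∞}

theorem norm_add_single_rpow [DecidableEq α] (hp : 0 < p.toReal) (x : lp E p) {i : α}
    (hx : x i = 0) (c : E i) :
    ‖x + lp.single p i c‖ ^ p.toReal = ‖x‖ ^ p.toReal + ‖c‖ ^ p.toReal := by
  refine (hasSum_norm hp _).unique ?_
  convert (hasSum_norm hp x).add (hasSum_ite_eq i (‖c‖ ^ p.toReal)) using 1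
  funext j
  by_cases hj : j = i
  · subst hj
    simp [hx, Real.zero_rpow hp.ne']
  · simp [hj]

theorem norm_sub_sum_single_le [DecidableEq α] (hp : 0 < p.toReal) (f g : lp E p)
    (s : Finset α) (hg : ∀ i ∉ s, g i = 0) :
    ‖f - ∑ i ∈ s, lp.single p i (f i)‖ ≤ ‖f - g‖ := by
  rw [← Real.rpow_le_rpow_iff (norm_nonneg' _) (norm_nonneg' _) hp, norm_rpow_eq_tsum hp,
    norm_rpow_eq_tsum hp]
  refine Summable.tsum_le_tsum (fun j => ?_) ((lp.memℓp _).summable hp)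
    ((lp.memℓp _).summable hp)
  simp only [coeFn_sub, coeFn_sum, lp.coeFn_single, Pi.sub_apply, Finset.sum_apply,
    Finset.sum_pi_single]
  by_cases hj : j ∈ s
  · simp [hj, Real.zero_rpow hp.ne']
    positivity
  · simp [hj, hg j hj]

theorem apply_eq_zero_of_mem_span {𝕜 : Type*} [NormedRing 𝕜] [∀ i, Module 𝕜 (E i)]
    [∀ i, IsBoundedSMul 𝕜 (E i)] {s : Set (lp E p)} {i : α} (hs : ∀ x ∈ s, x i = 0)
    {g : lp E p} (hg : g ∈ Submodule.span 𝕜 s) : g i = 0 :=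
  Submodule.span_le (p := LinearMap.ker (lp.evalₗ (𝕜 := 𝕜) E p i)).mpr hs hg

end lp

namespace ellq

variable {q : ℝ}

theorem single_eq_smul (j : ℕ) (c : ℝ) :
    (lp.single _ j c : ellq q) = c • (lp.single _ j 1 : ellq q) := by
  rw [← lp.single_smul, smul_eq_mul, mul_one]

variable [Fact (1 ≤ ENNReal.ofReal q)]

theorem one_le : 1 ≤ q := ENNReal.one_le_ofReal.mp Fact.out

theorem toReal_exponent : (ENNReal.ofReal q).toReal = q :=
  ENNReal.toReal_ofReal (zero_le_one.trans one_le)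

theorem toReal_exponent_pos : 0 < (ENNReal.ofReal q).toReal := by
  rw [toReal_exponent]
  exact zero_lt_one.trans_le one_le

theorem hasSum_abs_rpow (x : ellq q) : HasSum (fun j => |x j| ^ q) (‖x‖ ^ q) := by
  simpa [toReal_exponent] using lp.hasSum_norm toReal_exponent_pos x

theorem exists_clm_eq_tsum_mul (hq : 1 < q) (a : ℕ → ℝ)
    (ha : Summable fun j => |a j| ^ (q / (q - 1))) (ha1 : ∑' j, |a j| ^ (q / (q - 1)) ≤ 1) :
    ∃ F : ellq q →L[ℝ] ℝ, ‖F‖ ≤ 1 ∧ ∀ x, F x = ∑' j, a j * x j := by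
  have hpq : (q / (q - 1)).HolderConjugate q := (Real.HolderConjugate.conjExponent hq).symm
  have : Fact (1 ≤ ENNReal.ofReal (q / (q - 1))) :=
    ⟨ENNReal.one_le_ofReal.mpr hpq.lt.le⟩
  have := hpq.ennrealOfReal
  have hp : (ENNReal.ofReal (q / (q - 1))).toReal = q / (q - 1) :=
    ENNReal.toReal_ofReal hpq.nonneg
  let a' : lp (fun _ : ℕ => ℝ) (ENNReal.ofReal (q / (q - 1))) :=
    ⟨a, memℓp_gen (by simpa [hp] using ha)⟩
  have ha' : ‖a'‖ ≤ 1 :=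
    lp.norm_le_of_tsum_le (by rw [hp]; exact hpq.pos) zero_le_one (by simpa [hp, a'] using ha1)
  let B : ℕ → ℝ →L[ℝ] ℝ →L[ℝ] ℝ := fun _ => ContinuousLinearMap.mul ℝ ℝ
  have hB : ∀ i, ‖B i‖ ≤ (1 : NNReal) := fun _ => by simp [B]
  refine ⟨lp.dualPairing _ _ B hB a', ?_, fun x => rfl⟩
  calc ‖lp.dualPairing _ _ B hB a'‖
      ≤ ‖lp.dualPairing _ (ENNReal.ofReal q) B hB‖ * ‖a'‖ := ContinuousLinearMap.le_opNorm _ _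
    _ ≤ 1 * 1 := by gcongr; exact lp.norm_dualPairing _ _
    _ = 1 := one_mul 1

variable (q) in
def signedUnitVectors : Set (ellq q) :=
  {g | ∃ j, g = lp.single _ j 1 ∨ g = -lp.single _ j 1}

theorem isDictionary_signedUnitVectors : IsDictionary (signedUnitVectors q) := by
  have hp : (0 : ℝ≥0∞) < ENNReal.ofReal q := zero_lt_one.trans_le Fact.out
  refine ⟨?_, ?_, ?_⟩
  · rintro g ⟨j, rfl | rfl⟩ <;> simp [lp.norm_single hp]
  · rintro g ⟨j, rfl | rfl⟩
    · exact ⟨j, Or.inr rfl⟩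
    · exact ⟨j, Or.inl (neg_neg _)⟩
  · refine eq_top_iff.mpr fun x _ => ?_
    rw [← SetLike.mem_coe, Submodule.topologicalClosure_coe]
    refine mem_closure_of_tendsto (lp.hasSum_single ENNReal.ofReal_ne_top x)
      (Eventually.of_forall fun s => Submodule.sum_mem _ fun j _ => ?_)
    rw [single_eq_smul]
    exact Submodule.smul_mem _ _ (Submodule.subset_span ⟨j, Or.inl rfl⟩)

theorem mul_sSup_le (F : ellq q →L[ℝ] ℝ) {t : ℝ} (ht : 0 ≤ t) (i : ℕ)
    (h : ∀ j, t * |F (lp.single _ j 1)| ≤ F (lp.single _ i 1)) :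
    t * sSup ((fun g => F g) '' signedUnitVectors q) ≤ F (lp.single _ i 1) := by
  rw [← smul_eq_mul, ← Real.sSup_smul_of_nonneg ht]
  refine Real.sSup_le ?_ ((mul_nonneg ht (abs_nonneg _)).trans (h i))
  rintro _ ⟨_, ⟨_, ⟨j, rfl | rfl⟩, rfl⟩, rfl⟩
  · exact (mul_le_mul_of_nonneg_left (le_abs_self _) ht).trans (h j)
  · simpa using (mul_le_mul_of_nonneg_left (neg_le_abs _) ht).trans (h j)

end ellq

theorem exists_not_summable_indicator_eventually_subset {a : ℕ → ℝ} (ha : ∀ n, 0 ≤ a n)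
    {S : ℕ → Set ℕ} (hS : Antitone S) (h : ∀ m, ¬ Summable ((S m).indicator a)) :
    ∃ U ⊆ S 0, ¬ Summable (U.indicator a) ∧
      ∀ m, ∃ b, ∀ i ∈ U, b ≤ i → i ∈ S m := by
  have block : ∀ m b, ∃ M, b < M ∧ 1 ≤ ∑ i ∈ Finset.Ico b M, (S m).indicator a i := by
    intro m b
    have hnn : ∀ i, 0 ≤ (S m).indicator a i := Set.indicator_nonneg fun i _ => ha i
    obtain ⟨M, hM, hbM⟩ := (((not_summable_iff_tendsto_nat_atTop_of_nonneg hnn).mp (h m)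
      |>.eventually_ge_atTop (∑ i ∈ Finset.range b, (S m).indicator a i + 1)).and
      (eventually_gt_atTop b)).exists
    refine ⟨M, hbM, ?_⟩
    linarith [Finset.sum_range_add_sum_Ico ((S m).indicator a) hbM.le]
  choose next hnext hblock using block
  let B : ℕ → ℕ := fun k => Nat.rec 0 (fun k b => next k b) k
  have hB : StrictMono B := strictMono_nat_of_lt_succ fun k => hnext k (B k)
  let U := {i | ∃ k, i ∈ Finset.Ico (B k) (B (k + 1)) ∧ i ∈ S k}
  refine ⟨U, fun i ⟨k, _, hi⟩ => hS (Nat.zero_le k) hi, fun hU => ?_,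
    fun m => ⟨B m, ?_⟩⟩
  · have hmass : ∀ K : ℕ, (K : ℝ) ≤ ∑ i ∈ Finset.Ico 0 (B K), U.indicator a i := by
      intro K
      induction K with
      | zero => simp [B]
      | succ K ih =>
        rw [← Finset.sum_Ico_consecutive _ (Nat.zero_le _) (hB (Nat.lt_succ_self K)).le]
        have : 1 ≤ ∑ i ∈ Finset.Ico (B K) (B (K + 1)), U.indicator a i := by
          refine (hblock K (B K)).trans (Finset.sum_le_sum fun i hi => ?_)
          by_cases hiS : i ∈ S K
          · rw [Set.indicator_of_mem hiS,
              Set.indicator_of_mem (show i ∈ U from ⟨K, hi, hiS⟩)]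
          · rw [Set.indicator_of_notMem hiS]
            exact Set.indicator_nonneg (fun i _ => ha i) i
        push_cast
        linarith
    obtain ⟨K, hK⟩ := exists_nat_gt (∑' i, U.indicator a i)
    exact (hK.trans_le ((hmass K).trans (hU.sum_le_tsum _
      fun i _ => Set.indicator_nonneg (fun i _ => ha i) i))).false
  · rintro i ⟨k, hik, hiS⟩ hmi
    rw [Finset.mem_Ico] at hik
    refine hS ?_ hiS
    by_contra! hkm
    exact absurd (hmi.trans_lt hik.2) (not_lt.mpr (hB.monotone hkm))

theorem exists_strictMono_not_summable_comp {a : ℕ → ℝ} (ha : ∀ n, 0 ≤ a n)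
    {S : ℕ → Set ℕ} (hS : Antitone S) (h : ∀ m, ¬ Summable ((S m).indicator a)) :
    ∃ n : ℕ → ℕ, StrictMono n ∧ (∀ k, n k ∈ S 0) ∧ ¬ Summable (a ∘ n) ∧
      ∀ m, ∃ N, ∀ k ≥ N, n k ∈ S m := by
  obtain ⟨U, hU0, hU, hUS⟩ := exists_not_summable_indicator_eventually_subset ha hS h
  have hUinf : U.Infinite := fun hfin =>
    hU (summable_of_hasFiniteSupport (hfin.subset Set.support_indicator_subset))
  have hmem : ∀ k, Nat.nth (· ∈ U) k ∈ U := Nat.nth_mem_of_infinite hUinf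
  have hmono : StrictMono (Nat.nth (· ∈ U)) := Nat.nth_strictMono hUinf
  refine ⟨Nat.nth (· ∈ U), hmono, fun k => hU0 (hmem k), fun hs => hU ?_, fun m => ?_⟩
  · have hcomp : U.indicator a ∘ Nat.nth (· ∈ U) = a ∘ Nat.nth (· ∈ U) :=
      funext fun k => Set.indicator_of_mem (hmem k) a
    rw [← (Nat.nth_injective (p := (· ∈ U)) hUinf).summable_iff, hcomp]
    · exact hs
    · intro i hi
      exact Set.indicator_of_notMem (fun hiU => hi (Nat.range_nth_of_infinite hUinf ▸ hiU)) a
  · obtain ⟨b, hb⟩ := hUS m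
    exact ⟨b, fun k hk => hb _ (hmem k) (hk.trans (hmono.id_le k))⟩

theorem isLittleO_of_lt_div {x a : ℕ → ℝ} (ha : ∀ k, 0 ≤ a k)
    (h : ∀ m : ℕ, ∃ N, ∀ k ≥ N, x k < a k / (m + 1)) : IsLittleO x a := by
  intro ε hε
  obtain ⟨m, hm⟩ := exists_nat_one_div_lt hε
  obtain ⟨N, hN⟩ := h m
  refine ⟨N, fun k hk => (hN k hk).le.trans ?_⟩
  rw [div_eq_mul_one_div, mul_comm]
  exact mul_le_mul_of_nonneg_right hm.le (ha k)

def tightSteps (p : ℝ) (t δ η : ℕ → ℝ) (m : ℕ) : Set ℕ :=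
  {n | 1 ≤ n ∧ δ n < t (n + 1) ^ p / (m + 1) ∧ η n < t (n + 1) ^ p / (m + 1)}

theorem antitone_tightSteps {p : ℝ} {t : ℕ → ℝ} (δ η : ℕ → ℝ)
    (ht : ∀ n, 0 ≤ t (n + 1) ^ p) :
    Antitone (tightSteps p t δ η) := by
  intro m m' hmm' n ⟨hn, hδ, hη⟩
  have hle : t (n + 1) ^ p / (m' + 1) ≤ t (n + 1) ^ p / (m + 1) :=
    div_le_div_of_nonneg_left (ht n) (by positivity) (by exact_mod_cast Nat.succ_le_succ hmm')
  exact ⟨hn, hδ.trans_le hle, hη.trans_le hle⟩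

structure StallPlan (q : ℝ) (t δ η : ℕ → ℝ) where
  N : ℕ
  advance : Set ℕ
  slack : Set ℕ
  one_lt_q : 1 < q
  weakness : IsWeaknessSeq t
  perturbation : IsPerturbationSeq δ
  error : IsErrorSeq η
  N_pos : 0 < N
  zero_mem_advance : 0 ∈ advance
  zero_notMem_slack : 0 ∉ slack
  summable_advance : Summable (advance.indicator fun n => t (n + 1) ^ (q / (q - 1)))
  le_error : ∀ n ∈ slack, t (n + 1) ^ (q / (q - 1)) / N ≤ η n
  le_perturbation : ∀ n ∉ advance, n ∉ slack → t (n + 1) ^ (q / (q - 1)) / N ≤ δ n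

namespace StallPlan

def ofTightSteps {q : ℝ} {t δ η : ℕ → ℝ} (hq : 1 < q) (ht : IsWeaknessSeq t)
    (hδ : IsPerturbationSeq δ) (hη : IsErrorSeq η) (m : ℕ)
    (hm : Summable ((tightSteps (q / (q - 1)) t δ η m).indicator
      fun n => t (n + 1) ^ (q / (q - 1)))) : StallPlan q t δ η where
  N := m + 1
  advance := insert 0 (tightSteps (q / (q - 1)) t δ η m)
  slack := {n | n ∉ insert 0 (tightSteps (q / (q - 1)) t δ η m) ∧
    δ n < t (n + 1) ^ (q / (q - 1)) / (m + 1)}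
  one_lt_q := hq
  weakness := ht
  perturbation := hδ
  error := hη
  N_pos := m.succ_pos
  zero_mem_advance := Set.mem_insert 0 _
  zero_notMem_slack h := h.1 (Set.mem_insert 0 _)
  summable_advance := by
    rw [← summable_nat_add_iff 1] at hm ⊢
    refine hm.congr fun n => ?_
    by_cases h : n + 1 ∈ tightSteps (q / (q - 1)) t δ η m
    · rw [Set.indicator_of_mem h, Set.indicator_of_mem (Set.mem_insert_of_mem 0 h)]
    · rw [Set.indicator_of_notMem h, Set.indicator_of_notMem]
      simp [h]
  le_error n hn := by
    obtain ⟨hnA, hδn⟩ := hn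
    simp only [Set.mem_insert_iff, tightSteps, Set.mem_ofPred_eq, not_or, not_and, not_lt] at hnA
    push_cast
    exact hnA.2 (Nat.one_le_iff_ne_zero.mpr hnA.1) hδn
  le_perturbation n hnA hnB := by
    push_cast
    exact not_lt.mp fun hδn => hnB ⟨hnA, hδn⟩

variable {q : ℝ} {t δ η : ℕ → ℝ} (P : StallPlan q t δ η)

def flat : ℝ := (P.N : ℝ) ^ (-q⁻¹)

def size (n : ℕ) : ℝ := t (n + 1) ^ (q - 1)⁻¹ * P.flat

-- Coordinates `0, …, N - 1` are flat and coordinate `N + k` belongs to step `k`; coordinate `N`,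
-- the one of step `0`, is also the one re-selected at every step outside `advance`.
def coord (j : ℕ) : ℝ := if j < P.N then P.flat else P.advance.indicator P.size (j - P.N)

open scoped Classical in
def pick (n : ℕ) : ℕ := if n ∈ P.advance then P.N + n else P.N

def picked (n : ℕ) : Finset ℕ := (Finset.range n).image P.pick

def leftover (n : ℕ) : ℝ := P.slack.indicator P.size n

def perturbed : Set ℕ := (P.advance ∪ P.slack)ᶜ

def scale (n : ℕ) : ℝ := 1 - P.perturbed.indicator δ n

def bonus (n : ℕ) : ℝ := P.perturbed.indicator (fun n => t (n + 1) * P.flat ^ (q - 1)) n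

include P in
theorem q_pos : 0 < q := zero_lt_one.trans P.one_lt_q

include P in
theorem sub_one_pos : 0 < q - 1 := sub_pos.mpr P.one_lt_q

include P in
theorem holderConjugate : q.HolderConjugate (q / (q - 1)) := .conjExponent P.one_lt_q

include P in
theorem t_nonneg (n : ℕ) : 0 ≤ t (n + 1) := (P.weakness (n + 1) n.succ_pos).1

include P in
theorem t_le_one (n : ℕ) : t (n + 1) ≤ 1 := (P.weakness (n + 1) n.succ_pos).2

theorem flat_pos : 0 < P.flat := Real.rpow_pos_of_pos (Nat.cast_pos.mpr P.N_pos) _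

theorem flat_rpow : P.flat ^ q = (P.N : ℝ)⁻¹ := by
  rw [flat, ← Real.rpow_mul (Nat.cast_nonneg _), neg_mul, inv_mul_cancel₀ P.q_pos.ne',
    Real.rpow_neg_one]

theorem size_nonneg (n : ℕ) : 0 ≤ P.size n :=
  mul_nonneg (Real.rpow_nonneg (P.t_nonneg n) _) P.flat_pos.le

theorem size_le_flat (n : ℕ) : P.size n ≤ P.flat :=
  mul_le_of_le_one_left P.flat_pos.le
    (Real.rpow_le_one (P.t_nonneg n) (P.t_le_one n) (inv_nonneg.mpr P.sub_one_pos.le))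

theorem size_rpow (n : ℕ) : P.size n ^ q = t (n + 1) ^ (q / (q - 1)) / P.N := by
  rw [size, Real.mul_rpow (Real.rpow_nonneg (P.t_nonneg n) _) P.flat_pos.le, flat_rpow,
    ← Real.rpow_mul (P.t_nonneg n), inv_mul_eq_div, div_eq_mul_inv _ (P.N : ℝ)]

theorem coord_nonneg (j : ℕ) : 0 ≤ P.coord j := by
  unfold coord
  split_ifs
  · exact P.flat_pos.le
  · exact Set.indicator_nonneg (fun n _ => P.size_nonneg n) _

theorem coord_le_flat (j : ℕ) : P.coord j ≤ P.flat := by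
  unfold coord
  split_ifs
  · exact le_rfl
  · exact Set.indicator_apply_le' (fun _ => P.size_le_flat _) (fun _ => P.flat_pos.le)

theorem pick_zero : P.pick 0 = P.N := by simp [pick, P.zero_mem_advance]

theorem pick_of_mem {n : ℕ} (h : n ∈ P.advance) : P.pick n = P.N + n := by simp [pick, h]

theorem pick_of_notMem {n : ℕ} (h : n ∉ P.advance) : P.pick n = P.N := by simp [pick, h]

theorem N_le_pick (n : ℕ) : P.N ≤ P.pick n := by
  unfold pick
  split_ifs <;> omega

theorem N_mem_picked {n : ℕ} (hn : 0 < n) : P.N ∈ P.picked n :=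
  Finset.mem_image.mpr ⟨0, Finset.mem_range.mpr hn, P.pick_zero⟩

theorem leftover_nonneg (n : ℕ) : 0 ≤ P.leftover n :=
  Set.indicator_nonneg (fun n _ => P.size_nonneg n) n

theorem leftover_le_flat (n : ℕ) : P.leftover n ≤ P.flat :=
  Set.indicator_apply_le' (fun _ => P.size_le_flat n) (fun _ => P.flat_pos.le)

theorem leftover_zero : P.leftover 0 = 0 := Set.indicator_of_notMem P.zero_notMem_slack _

theorem leftover_rpow_le {n : ℕ} (hn : 1 ≤ n) : P.leftover n ^ q ≤ η n := by
  by_cases h : n ∈ P.slack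
  · rw [leftover, Set.indicator_of_mem h, size_rpow]
    exact P.le_error n h
  · rw [leftover, Set.indicator_of_notMem h, Real.zero_rpow P.q_pos.ne']
    exact P.error n hn

theorem summable_coord_rpow : Summable fun j => |P.coord j| ^ q := by
  rw [← summable_nat_add_iff P.N]
  have hshift : (fun j => |P.coord (j + P.N)| ^ q) =
      fun j => P.advance.indicator (fun n => t (n + 1) ^ (q / (q - 1))) j / P.N := by
    funext j
    simp only [coord, if_neg (Nat.not_lt.mpr (Nat.le_add_left P.N j)), Nat.add_sub_cancel]
    by_cases hj : j ∈ P.advance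
    · simp [hj, abs_of_nonneg (P.size_nonneg j), P.size_rpow]
    · simp [hj, Real.zero_rpow P.q_pos.ne']
  rw [hshift]
  exact P.summable_advance.div_const _

theorem notMem_picked_of_lt {n j : ℕ} (hj : j < P.N) : j ∉ P.picked n := by
  simp only [picked, Finset.mem_image, not_exists, not_and]
  intro k _ hk
  have := P.N_le_pick k
  omega

theorem scale_nonneg (n : ℕ) : 0 ≤ P.scale n :=
  sub_nonneg.mpr (Set.indicator_apply_le' (fun _ => (P.perturbation n).2) fun _ => zero_le_one)

theorem scale_le_one (n : ℕ) : P.scale n ≤ 1 :=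
  sub_le_self _ (Set.indicator_nonneg (fun n _ => (P.perturbation n).1) n)

theorem one_sub_le_scale (n : ℕ) : 1 - δ n ≤ P.scale n :=
  sub_le_sub_left (Set.indicator_apply_le' (fun _ => le_rfl) fun _ => (P.perturbation n).1) 1

theorem bonus_nonneg (n : ℕ) : 0 ≤ P.bonus n :=
  Set.indicator_nonneg (fun n _ => mul_nonneg (P.t_nonneg n) (Real.rpow_nonneg P.flat_pos.le _)) n

theorem bonus_rpow (n : ℕ) : P.bonus n ^ (q / (q - 1)) =
    P.perturbed.indicator (fun n => t (n + 1) ^ (q / (q - 1)) / P.N) n := by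
  by_cases h : n ∈ P.perturbed
  · rw [bonus, Set.indicator_of_mem h, Set.indicator_of_mem h,
      Real.mul_rpow (P.t_nonneg n) (Real.rpow_nonneg P.flat_pos.le _),
      ← Real.rpow_mul P.flat_pos.le, P.holderConjugate.sub_one_mul_conj, flat_rpow,
      div_eq_mul_inv _ (P.N : ℝ)]
  · rw [bonus, Set.indicator_of_notMem h, Set.indicator_of_notMem h,
      Real.zero_rpow P.holderConjugate.symm.pos.ne']

variable [Fact (1 ≤ ENNReal.ofReal q)]

def initial : ellq q :=
  ⟨P.coord, memℓp_gen (by simpa [ellq.toReal_exponent] using P.summable_coord_rpow)⟩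

def tail (n : ℕ) : ellq q := P.initial - ∑ j ∈ P.picked n, lp.single _ j (P.initial j)

def approximant (n : ℕ) : ellq q :=
  ∑ j ∈ P.picked n, lp.single _ j (P.initial j) - lp.single _ P.N (P.leftover n)

def residual (n : ℕ) : ellq q := P.initial - P.approximant n

def atom (n : ℕ) : ellq q := lp.single _ (P.pick (n - 1)) 1

theorem residual_eq (n : ℕ) : P.residual n = P.tail n + lp.single _ P.N (P.leftover n) := by
  simp only [residual, approximant, tail]
  abel

theorem tail_apply (n j : ℕ) : P.tail n j = if j ∈ P.picked n then 0 else P.coord j := by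
  simp only [tail, lp.coeFn_sub, lp.coeFn_sum, lp.coeFn_single, Pi.sub_apply, Finset.sum_apply,
    Finset.sum_pi_single]
  split_ifs <;> simp [initial]

theorem residual_apply (n j : ℕ) :
    P.residual n j = P.tail n j + if j = P.N then P.leftover n else 0 := by
  rw [residual_eq, lp.coeFn_add, Pi.add_apply, lp.coeFn_single, Pi.single_apply]

theorem residual_apply_of_notMem {n j : ℕ} (h : j ∉ P.picked n) :
    P.residual n j = P.coord j := by
  rw [residual_apply, tail_apply, if_neg h]
  split_ifs with hj
  · obtain rfl : n = 0 := by
      by_contra hn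
      exact h (hj ▸ P.N_mem_picked (Nat.pos_of_ne_zero hn))
    rw [leftover_zero, add_zero]
  · rw [add_zero]

theorem residual_apply_of_mem {n j : ℕ} (h : j ∈ P.picked n) :
    P.residual n j = if j = P.N then P.leftover n else 0 := by
  rw [residual_apply, tail_apply, if_pos h, zero_add]

theorem residual_nonneg (n j : ℕ) : 0 ≤ P.residual n j := by
  by_cases h : j ∈ P.picked n
  · rw [P.residual_apply_of_mem h]
    split_ifs
    exacts [P.leftover_nonneg n, le_rfl]
  · rw [P.residual_apply_of_notMem h]
    exact P.coord_nonneg j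

theorem residual_le_flat (n j : ℕ) : P.residual n j ≤ P.flat := by
  by_cases h : j ∈ P.picked n
  · rw [P.residual_apply_of_mem h]
    split_ifs
    exacts [P.leftover_le_flat n, P.flat_pos.le]
  · rw [P.residual_apply_of_notMem h]
    exact P.coord_le_flat j

theorem residual_pick {n : ℕ} (hn : n ∉ P.perturbed) : P.residual n (P.pick n) = P.size n := by
  by_cases hA : n ∈ P.advance
  · have hfresh : P.N + n ∉ P.picked n := by
      simp only [picked, Finset.mem_image, Finset.mem_range, not_exists, not_and]
      intro k hk hkn
      unfold pick at hkn
      split_ifs at hkn <;> omega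
    rw [P.pick_of_mem hA, P.residual_apply_of_notMem hfresh, coord, if_neg (by omega),
      Nat.add_sub_cancel_left, Set.indicator_of_mem hA]
  · have hB : n ∈ P.slack := by simpa [perturbed, hA] using hn
    have hn0 : 0 < n := Nat.pos_of_ne_zero fun h => P.zero_notMem_slack (h ▸ hB)
    rw [P.pick_of_notMem hA, P.residual_apply_of_mem (P.N_mem_picked hn0), if_pos rfl, leftover,
      Set.indicator_of_mem hB]

theorem residual_N_of_perturbed {n : ℕ} (hn : n ∈ P.perturbed) : P.residual n P.N = 0 := by
  simp only [perturbed, Set.mem_compl_iff, Set.mem_union, not_or] at hn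
  have hn0 : 0 < n := Nat.pos_of_ne_zero fun h => hn.1 (h ▸ P.zero_mem_advance)
  rw [P.residual_apply_of_mem (P.N_mem_picked hn0), if_pos rfl, leftover,
    Set.indicator_of_notMem hn.2]

theorem norm_residual_rpow (n : ℕ) :
    ‖P.residual n‖ ^ q = ‖P.tail n‖ ^ q + P.leftover n ^ q := by
  rcases Nat.eq_zero_or_pos n with rfl | hn
  · rw [residual_eq, leftover_zero, lp.single_zero, add_zero, Real.zero_rpow P.q_pos.ne', add_zero]
  · have h := lp.norm_add_single_rpow ellq.toReal_exponent_pos (P.tail n)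
      (i := P.N) (by rw [tail_apply, if_pos (P.N_mem_picked hn)]) (P.leftover n)
    rwa [ellq.toReal_exponent, Real.norm_eq_abs, abs_of_nonneg (P.leftover_nonneg n),
      ← residual_eq] at h

theorem one_le_norm_tail (n : ℕ) : 1 ≤ ‖P.tail n‖ := by
  have h := lp.sum_rpow_le_norm_rpow ellq.toReal_exponent_pos (P.tail n)
    (Finset.range P.N)
  have hflat : ∀ j ∈ Finset.range P.N,
      ‖P.tail n j‖ ^ (ENNReal.ofReal q).toReal = P.flat ^ q := by
    intro j hj
    have hj := Finset.mem_range.mp hj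
    rw [tail_apply, if_neg (P.notMem_picked_of_lt hj), coord, if_pos hj, Real.norm_eq_abs,
      abs_of_pos P.flat_pos, ellq.toReal_exponent]
  rw [Finset.sum_congr rfl hflat, Finset.sum_const, Finset.card_range, nsmul_eq_mul, flat_rpow,
    mul_inv_cancel₀ (Nat.cast_pos.mpr P.N_pos).ne', ellq.toReal_exponent] at h
  exact (Real.rpow_le_rpow_iff zero_le_one (norm_nonneg _) P.q_pos).mp (by rwa [Real.one_rpow])

theorem one_le_norm_residual (n : ℕ) : 1 ≤ ‖P.residual n‖ := by
  refine (Real.rpow_le_rpow_iff zero_le_one (norm_nonneg _) P.q_pos).mp ?_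
  rw [Real.one_rpow, norm_residual_rpow]
  have := Real.one_le_rpow (P.one_le_norm_tail n) P.q_pos.le
  have := Real.rpow_nonneg (P.leftover_nonneg n) q
  linarith

theorem approximant_mem_span {n : ℕ} (hn : 0 < n) :
    P.approximant n ∈ Submodule.span ℝ (P.atom '' Set.Icc 1 n) := by
  have hsingle : ∀ j ∈ P.picked n, ∀ c : ℝ,
      lp.single _ j c ∈ Submodule.span ℝ (P.atom '' Set.Icc 1 n) := by
    intro j hj c
    obtain ⟨k, hk, rfl⟩ := Finset.mem_image.mp hj
    rw [ellq.single_eq_smul]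
    refine Submodule.smul_mem _ _ (Submodule.subset_span ⟨k + 1, ?_, by simp [atom]⟩)
    have := Finset.mem_range.mp hk
    exact ⟨by omega, by omega⟩
  exact Submodule.sub_mem _ (Submodule.sum_mem _ fun j hj => hsingle j hj _)
    (hsingle _ (P.N_mem_picked hn) _)

theorem norm_tail_le_approxError (n : ℕ) : ‖P.tail n‖ ≤ approxError P.initial P.atom n := by
  refine le_csInf ⟨_, 0, Submodule.zero_mem _, rfl⟩ ?_
  rintro _ ⟨g, hg, rfl⟩
  refine lp.norm_sub_sum_single_le ellq.toReal_exponent_pos _ g _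
    fun j hj => lp.apply_eq_zero_of_mem_span ?_ hg
  rintro _ ⟨k, ⟨hk1, hkn⟩, rfl⟩
  rw [atom, lp.coeFn_single, Pi.single_apply, if_neg]
  rintro rfl
  exact hj (Finset.mem_image.mpr ⟨k - 1, Finset.mem_range.mpr (by omega), rfl⟩)

theorem norm_residual_le {n : ℕ} (hn : 1 ≤ n) :
    ‖P.residual n‖ ≤ (1 + η n) * approxError P.initial P.atom n := by
  have hη := P.error n hn
  have htail := Real.one_le_rpow (P.one_le_norm_tail n) P.q_pos.le
  refine le_trans ?_ (mul_le_mul_of_nonneg_left (P.norm_tail_le_approxError n) (by linarith))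
  rw [← Real.rpow_le_rpow_iff (norm_nonneg _) (by positivity) P.q_pos, P.norm_residual_rpow,
    Real.mul_rpow (by linarith) (norm_nonneg _)]
  calc ‖P.tail n‖ ^ q + P.leftover n ^ q ≤ (1 + η n) * ‖P.tail n‖ ^ q := by
        nlinarith [P.leftover_rpow_le hn]
    _ ≤ (1 + η n) ^ q * ‖P.tail n‖ ^ q := by
        gcongr
        exact Real.self_le_rpow_of_one_le (by linarith) P.one_lt_q.le

def coeff (n j : ℕ) : ℝ :=
  P.scale n * (P.residual n j / ‖P.residual n‖) ^ (q - 1) +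
    (Pi.single P.N (P.bonus n) : ℕ → ℝ) j

theorem single_bonus_mul_residual (n j : ℕ) :
    (Pi.single P.N (P.bonus n) : ℕ → ℝ) j * P.residual n j = 0 := by
  by_cases hj : j = P.N
  · subst hj
    by_cases h : n ∈ P.perturbed
    · rw [P.residual_N_of_perturbed h, mul_zero]
    · rw [Pi.single_eq_same, bonus, Set.indicator_of_notMem h, zero_mul]
  · rw [Pi.single_eq_of_ne hj, zero_mul]

theorem hasSum_normalized_rpow (n : ℕ) :
    HasSum (fun j => (P.residual n j / ‖P.residual n‖) ^ q) 1 := by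
  have hr : ‖P.residual n‖ ^ q ≠ 0 :=
    (Real.rpow_pos_of_pos (one_pos.trans_le (P.one_le_norm_residual n)) q).ne'
  have hfun : (fun j => (P.residual n j / ‖P.residual n‖) ^ q) =
      fun j => |P.residual n j| ^ q / ‖P.residual n‖ ^ q := funext fun j => by
    rw [Real.div_rpow (P.residual_nonneg n j) (norm_nonneg _),
      abs_of_nonneg (P.residual_nonneg n j)]
  rw [hfun]
  simpa [div_self hr] using (ellq.hasSum_abs_rpow (P.residual n)).div_const (‖P.residual n‖ ^ q)

theorem coeff_nonneg (n j : ℕ) : 0 ≤ P.coeff n j := by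
  refine add_nonneg (mul_nonneg (P.scale_nonneg n) (Real.rpow_nonneg (div_nonneg
    (P.residual_nonneg n j) (norm_nonneg _)) _)) ?_
  by_cases hj : j = P.N
  · rw [hj, Pi.single_eq_same]
    exact P.bonus_nonneg n
  · rw [Pi.single_eq_of_ne hj]

theorem abs_coeff_rpow (n j : ℕ) : |P.coeff n j| ^ (q / (q - 1)) =
    P.scale n ^ (q / (q - 1)) * (P.residual n j / ‖P.residual n‖) ^ q +
      (Pi.single P.N (P.bonus n ^ (q / (q - 1))) : ℕ → ℝ) j := by
  have hρ := div_nonneg (P.residual_nonneg n j) (norm_nonneg (P.residual n))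
  have hdisj : P.scale n * (P.residual n j / ‖P.residual n‖) ^ (q - 1) *
      (Pi.single P.N (P.bonus n) : ℕ → ℝ) j = 0 := by
    rcases mul_eq_zero.mp (P.single_bonus_mul_residual n j) with h | h
    · rw [h, mul_zero]
    · rw [h, zero_div, Real.zero_rpow P.sub_one_pos.ne', mul_zero, zero_mul]
  have hsingle : (Pi.single P.N (P.bonus n) : ℕ → ℝ) j ^ (q / (q - 1)) =
      (Pi.single P.N (P.bonus n ^ (q / (q - 1))) : ℕ → ℝ) j := by
    by_cases hj : j = P.N
    · rw [hj, Pi.single_eq_same, Pi.single_eq_same]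
    · rw [Pi.single_eq_of_ne hj, Pi.single_eq_of_ne hj,
        Real.zero_rpow P.holderConjugate.symm.pos.ne']
  rw [abs_of_nonneg (P.coeff_nonneg n j), coeff,
    Real.add_rpow_of_mul_eq_zero P.holderConjugate.symm.pos.ne' hdisj, hsingle,
    Real.mul_rpow (P.scale_nonneg n) (Real.rpow_nonneg hρ _), ← Real.rpow_mul hρ,
    P.holderConjugate.sub_one_mul_conj]

theorem hasSum_abs_coeff_rpow (n : ℕ) : HasSum (fun j => |P.coeff n j| ^ (q / (q - 1)))
    (P.scale n ^ (q / (q - 1)) + P.bonus n ^ (q / (q - 1))) := by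
  simp_rw [abs_coeff_rpow]
  have hmain : HasSum
      (fun j => P.scale n ^ (q / (q - 1)) * (P.residual n j / ‖P.residual n‖) ^ q)
      (P.scale n ^ (q / (q - 1))) := by
    simpa using (P.hasSum_normalized_rpow n).mul_left (P.scale n ^ (q / (q - 1)))
  exact hmain.add (hasSum_pi_single P.N _)

theorem tsum_abs_coeff_rpow_le (n : ℕ) : ∑' j, |P.coeff n j| ^ (q / (q - 1)) ≤ 1 := by
  rw [(P.hasSum_abs_coeff_rpow n).tsum_eq, bonus_rpow]
  by_cases h : n ∈ P.perturbed
  · have hδ := P.perturbation n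
    have hle := P.le_perturbation n (fun hA => h (Or.inl hA)) (fun hB => h (Or.inr hB))
    have hpow := Real.rpow_le_self_of_le_one (sub_nonneg.mpr hδ.2) (sub_le_self 1 hδ.1)
      P.holderConjugate.symm.lt.le
    rw [scale, Set.indicator_of_mem h, Set.indicator_of_mem h]
    linarith
  · rw [scale, Set.indicator_of_notMem h, Set.indicator_of_notMem h, sub_zero, Real.one_rpow,
      add_zero]

theorem exists_functional (n : ℕ) :
    ∃ F : ellq q →L[ℝ] ℝ, ‖F‖ ≤ 1 ∧ ∀ x, F x = ∑' j, P.coeff n j * x j :=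
  ellq.exists_clm_eq_tsum_mul P.one_lt_q _ (P.hasSum_abs_coeff_rpow n).summable
    (P.tsum_abs_coeff_rpow_le n)

def functional (n : ℕ) : ellq q →L[ℝ] ℝ := (P.exists_functional n).choose

theorem norm_functional_le (n : ℕ) : ‖P.functional n‖ ≤ 1 :=
  (P.exists_functional n).choose_spec.1

theorem functional_apply (n : ℕ) (x : ellq q) :
    P.functional n x = ∑' j, P.coeff n j * x j :=
  (P.exists_functional n).choose_spec.2 x

theorem functional_single (n j : ℕ) : P.functional n (lp.single _ j 1) = P.coeff n j := by
  simp [functional_apply, Pi.single_apply]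

theorem functional_residual (n : ℕ) :
    P.functional n (P.residual n) = P.scale n * ‖P.residual n‖ := by
  have hr : ‖P.residual n‖ ≠ 0 := (one_pos.trans_le (P.one_le_norm_residual n)).ne'
  have hterm : ∀ j, P.coeff n j * P.residual n j =
      P.scale n * ‖P.residual n‖ * (P.residual n j / ‖P.residual n‖) ^ q := by
    intro j
    have hρ := div_nonneg (P.residual_nonneg n j) (norm_nonneg (P.residual n))
    rw [coeff, add_mul, P.single_bonus_mul_residual, add_zero,
      ← Real.rpow_sub_one_mul_self hρ P.q_pos.ne']
    field_simp
  rw [functional_apply]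
  simp_rw [hterm]
  rw [((P.hasSum_normalized_rpow n).mul_left _).tsum_eq, mul_one]

theorem mul_abs_coeff_le (n j : ℕ) : t (n + 1) * |P.coeff n j| ≤ P.coeff n (P.pick n) := by
  rw [abs_of_nonneg (P.coeff_nonneg n j)]
  have hr := P.one_le_norm_residual n
  by_cases h : n ∈ P.perturbed
  · have hpick : P.pick n = P.N := P.pick_of_notMem fun hA => h (Or.inl hA)
    have hN : P.coeff n P.N = t (n + 1) * P.flat ^ (q - 1) := by
      rw [coeff, P.residual_N_of_perturbed h, zero_div, Real.zero_rpow P.sub_one_pos.ne', mul_zero,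
        zero_add, Pi.single_eq_same, bonus, Set.indicator_of_mem h]
    have hle : P.coeff n j ≤ P.flat ^ (q - 1) := by
      by_cases hj : j = P.N
      · rw [hj, hN]
        exact mul_le_of_le_one_left (Real.rpow_nonneg P.flat_pos.le _) (P.t_le_one n)
      · rw [coeff, Pi.single_eq_of_ne hj, add_zero]
        have hρ := div_nonneg (P.residual_nonneg n j) (norm_nonneg (P.residual n))
        refine (mul_le_of_le_one_left (Real.rpow_nonneg hρ _) (P.scale_le_one n)).trans
          (Real.rpow_le_rpow hρ ?_ P.sub_one_pos.le)
        exact (div_le_self (P.residual_nonneg n j) hr).trans (P.residual_le_flat n j)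
    rw [hpick, hN]
    exact mul_le_mul_of_nonneg_left hle (P.t_nonneg n)
  · have hcoeff : ∀ i, P.coeff n i = (P.residual n i / ‖P.residual n‖) ^ (q - 1) := by
      intro i
      rw [coeff, scale, bonus, Set.indicator_of_notMem h, Set.indicator_of_notMem h, sub_zero,
        one_mul, Pi.single_zero, Pi.zero_apply, add_zero]
    rw [hcoeff, hcoeff, P.residual_pick h, size, mul_div_assoc,
      Real.rpow_inv_mul_rpow (P.t_nonneg n) (div_nonneg P.flat_pos.le (norm_nonneg _))
        P.sub_one_pos.ne']
    exact mul_le_mul_of_nonneg_left (Real.rpow_le_rpow (div_nonneg (P.residual_nonneg n j)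
      (norm_nonneg _)) (div_le_div_of_nonneg_right (P.residual_le_flat n j) (norm_nonneg _))
      P.sub_one_pos.le) (P.t_nonneg n)

def realization : AWCGARealization (ellq.signedUnitVectors q) P.initial t δ η where
  F := P.functional
  φ := P.atom
  G := P.approximant
  fs := P.residual
  fs_zero := by simp [residual, approximant, picked, leftover_zero]
  F_norm := P.norm_functional_le
  F_norming n := by
    rw [functional_residual]
    exact mul_le_mul_of_nonneg_right (P.one_sub_le_scale n) (norm_nonneg _)
  φ_mem n := ⟨P.pick n, Or.inl (by simp [atom])⟩
  φ_greedy n := by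
    simpa [atom, functional_single] using ellq.mul_sSup_le (P.functional n) (P.t_nonneg n)
      (P.pick n) fun j => by simpa only [functional_single] using P.mul_abs_coeff_le n j
  G_mem n := P.approximant_mem_span n.succ_pos
  G_near n := P.norm_residual_le n.succ_pos
  fs_succ _ := rfl

theorem not_tendsto_norm_residual : ¬ Tendsto (fun n => ‖P.residual n‖) atTop (nhds 0) :=
  fun h => (h.eventually (gt_mem_nhds one_pos)).exists.elim
    fun n hn => (P.one_le_norm_residual n).not_gt hn

end StallPlan

theorem stmt_1_general (q p : ℝ) [Fact (1 ≤ ENNReal.ofReal q)] (hq1 : 1 < q)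
    (hp : p = q / (q - 1))
    (t δ η : ℕ → ℝ) (ht : IsWeaknessSeq t) (hδ : IsPerturbationSeq δ)
    (hη : IsErrorSeq η)
    (hfail : ∀ n : ℕ → ℕ, StrictMono n → (∀ k, 1 ≤ n k) →
      ¬ ((¬ Summable (fun k => t (n k + 1) ^ p)) ∧
        IsLittleO (fun k => δ (n k)) (fun k => t (n k + 1) ^ p) ∧
        IsLittleO (fun k => η (n k)) (fun k => t (n k + 1) ^ p))) :
    ∃ D : Set (ellq q), IsDictionary D ∧
      ∃ (f : ellq q) (r : AWCGARealization D f t δ η),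
        ¬ Tendsto (fun m => ‖r.fs m‖) atTop (nhds 0) := by
  subst hp
  have hpow : ∀ n, 0 ≤ t (n + 1) ^ (q / (q - 1)) :=
    fun n => Real.rpow_nonneg (ht (n + 1) n.succ_pos).1 _
  obtain ⟨m, hm⟩ : ∃ m, Summable ((tightSteps (q / (q - 1)) t δ η m).indicator
      fun n => t (n + 1) ^ (q / (q - 1))) := by
    by_contra! h
    obtain ⟨n, hmono, hn0, hdiv, hev⟩ :=
      exists_strictMono_not_summable_comp hpow (antitone_tightSteps δ η hpow) h
    exact hfail n hmono (fun k => (hn0 k).1) ⟨hdiv,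
      isLittleO_of_lt_div (fun k => hpow _) fun m => (hev m).imp fun _ hN k hk => (hN k hk).2.1,
      isLittleO_of_lt_div (fun k => hpow _) fun m => (hev m).imp fun _ hN k hk => (hN k hk).2.2⟩
  let P := StallPlan.ofTightSteps hq1 ht hδ hη m hm
  exact ⟨_, ellq.isDictionary_signedUnitVectors, P.initial, P.realization,
    P.not_tendsto_norm_residual⟩

/-- Necessity of the conditions for convergence of the AWCGA (Theorem 1.3, necessity). -/
theorem stmt_1 (q p : ℝ) [Fact (1 ≤ ENNReal.ofReal q)] (hq1 : 1 < q) (hq2 : q ≤ 2)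
    (hp : p = q / (q - 1))
    (t δ η : ℕ → ℝ) (ht : IsWeaknessSeq t) (hδ : IsPerturbationSeq δ)
    (hη : IsErrorSeq η) (hηbdd : ∃ C : ℝ, ∀ m, 1 ≤ m → η m ≤ C)
    (hfail : ∀ n : ℕ → ℕ, StrictMono n → (∀ k, 1 ≤ n k) →
      ¬ ((¬ Summable (fun k => t (n k + 1) ^ p)) ∧
        IsLittleO (fun k => δ (n k)) (fun k => t (n k + 1) ^ p) ∧
        IsLittleO (fun k => η (n k)) (fun k => t (n k + 1) ^ p))) :
    ∃ D : Set (ellq q), IsDictionary D ∧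
      ∃ (f : ellq q) (r : AWCGARealization D f t δ η),
        ¬ Tendsto (fun m => ‖r.fs m‖) atTop (nhds 0) :=
  stmt_1_general q p hq1 hp t δ η ht hδ hη hfail
end
end

section
/- Let 1 < q ≤ 2 and p = q/(q−1). Let (t_n)_{n≥1} be a weakness sequence with ∑_{n=1}^∞ t_n^p < ∞, let (δ_n)_{n≥0} be a perturbation sequence with ∑_{n=0}^∞ δ_n < ∞, and let (η_n)_{n≥1} be an error sequence with ∑_{n=1}^∞ η_n < ∞. Then in the real Banach space ℓ_q there exist a dictionary D, an element f ∈ ℓ_q, and a realization of the AWCGA of f with these sequences such that ‖f_n‖ does not tend to 0. -/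
open Filter

noncomputable section

variable {X : Type} [NormedAddCommGroup X] [NormedSpace ℝ X]

/-!
Take the dictionary `{±e_j}` of `ℓ_q` and `f = e_0 + ∑_{j ≥ 1} t_j^{p-1} e_j`, which lies
in `ℓ_q` because `(t_j^{p-1})^q = t_j^p`. With `φ_n = e_n`, let the residual `f_n` be `f` with
the coordinates `1, …, n` erased: it is an exact best approximation from `span {e_1, …, e_n}`,
and the Hölder norming functional of `f_n` is exact, so all `η_n ≥ 0` and `δ_n ≥ 0` are
admissible. Since `(p-1)(q-1) = 1`, that functional takes the value `t_{n+1} / ‖f_n‖^{q-1}` at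
`e_{n+1}` and at most `1 / ‖f_n‖^{q-1}` on the whole dictionary, so `e_{n+1}` is a
`t_{n+1}`-greedy choice. The coordinate `0` is never touched, hence `‖f_n‖ ≥ 1`.
-/

open scoped ENNReal lp

namespace lp

section SignedBasis

variable {α : Type} [DecidableEq α] {q : ℝ≥0∞}

variable (α q) in
def signedBasis : Set ℓ^q(α, ℝ) :=
  {g | ∃ j, g = lp.single q j 1 ∨ g = -lp.single q j 1}

lemma sub_sum_single_apply (x : ℓ^q(α, ℝ)) (s : Finset α) (k : α) :
    (x - ∑ j ∈ s, lp.single q j (x j)) k = if k ∈ s then 0 else x k := by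
  simp only [lp.coeFn_sub, lp.coeFn_sum, lp.coeFn_single, Pi.sub_apply, Finset.sum_apply,
    Finset.sum_pi_single]
  split_ifs <;> simp

lemma single_eq_smul_single_one (j : α) (c : ℝ) :
    (lp.single q j c : ℓ^q(α, ℝ)) = c • lp.single q j 1 := by
  rw [← lp.single_smul, smul_eq_mul, mul_one]

variable [Fact (1 ≤ q)]

lemma isDictionary_signedBasis (hq : q ≠ ⊤) : IsDictionary (signedBasis α q) := by
  have hq0 : 0 < q := zero_lt_one.trans_le Fact.out
  refine ⟨?_, ?_, ?_⟩
  · rintro g ⟨j, rfl | rfl⟩ <;> simp [lp.norm_single hq0]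
  · rintro g ⟨j, rfl | rfl⟩
    exacts [⟨j, Or.inr rfl⟩, ⟨j, Or.inl (neg_neg _)⟩]
  · refine eq_top_iff.2 fun x _ => ?_
    rw [← SetLike.mem_coe, Submodule.topologicalClosure_coe]
    refine mem_closure_of_tendsto (lp.hasSum_single hq x) (Eventually.of_forall fun s => ?_)
    refine Submodule.sum_mem _ fun j _ => ?_
    rw [single_eq_smul_single_one]
    exact Submodule.smul_mem _ _ (Submodule.subset_span ⟨j, Or.inl rfl⟩)

lemma sSup_image_signedBasis_le (F : ℓ^q(α, ℝ) →L[ℝ] ℝ) {c : ℝ} (hc0 : 0 ≤ c)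
    (hc : ∀ j, |F (lp.single q j 1)| ≤ c) :
    sSup ((fun g => F g) '' signedBasis α q) ≤ c := by
  refine Real.sSup_le ?_ hc0
  rintro - ⟨g, ⟨j, rfl | rfl⟩, rfl⟩
  · exact (le_abs_self _).trans (hc j)
  · exact (map_neg F _ ▸ neg_le_abs _).trans (hc j)

lemma norm_sub_sum_single_le_s5 (x : ℓ^q(α, ℝ)) (s : Finset α) {g : ℓ^q(α, ℝ)}
    (hg : g ∈ Submodule.span ℝ ((fun j => lp.single q j (1 : ℝ)) '' s)) :
    ‖x - ∑ j ∈ s, lp.single q j (x j)‖ ≤ ‖x - g‖ := by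
  have hg_out : ∀ k ∉ s, g k = 0 := fun k hk => by
    induction hg using Submodule.span_induction with
    | mem y hy =>
        obtain ⟨j, hj, rfl⟩ := hy
        exact lp.single_apply_ne q j _ (ne_of_mem_of_not_mem hj hk).symm
    | zero => rfl
    | add y z _ _ hy hz => simp [hy, hz]
    | smul c y _ hy => simp [hy]
  refine lp.norm_mono (zero_lt_one.trans_le Fact.out).ne' fun k => ?_
  rw [sub_sum_single_apply]
  split_ifs with hk
  · simp
  · simp [hg_out k hk]

lemma norm_sub_sum_single_Icc_le_approxError (x : ℓ^q(ℕ, ℝ)) (n : ℕ) :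
    ‖x - ∑ j ∈ Finset.Icc 1 n, lp.single q j (x j)‖ ≤
      approxError x (fun j => lp.single q j 1) n := by
  refine le_csInf ⟨_, 0, Submodule.zero_mem _, rfl⟩ ?_
  rintro - ⟨g, hg, rfl⟩
  exact norm_sub_sum_single_le_s5 x _ (by rwa [Finset.coe_Icc])

end SignedBasis

section NormingFunctional

variable {α : Type*} {p q : ℝ≥0∞}

-- The equality case of Hölder's inequality (the zero vector when `x = 0`, by division by zero).
def normingCoeff (x : ℓ^q(α, ℝ)) (j : α) : ℝ :=
  SignType.sign (x j) * |x j| ^ (q.toReal - 1) / ‖x‖ ^ (q.toReal - 1)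

lemma normingCoeff_of_nonneg (hq : 1 < q.toReal) (x : ℓ^q(α, ℝ)) {j : α} (hxj : 0 ≤ x j) :
    normingCoeff x j = x j ^ (q.toReal - 1) / ‖x‖ ^ (q.toReal - 1) := by
  rcases hxj.eq_or_lt with hxj | hxj
  · simp [normingCoeff, ← hxj, Real.zero_rpow (sub_ne_zero.2 hq.ne')]
  · rw [normingCoeff, sign_pos hxj, abs_of_pos hxj, SignType.coe_one, one_mul]

variable [Fact (1 ≤ q)]

lemma abs_normingCoeff_le (x : ℓ^q(α, ℝ)) (j : α) :
    |normingCoeff x j| ≤ |x j| ^ (q.toReal - 1) / ‖x‖ ^ (q.toReal - 1) := by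
  rw [normingCoeff, abs_div, abs_mul, abs_of_nonneg (by positivity : 0 ≤ |x j| ^ (q.toReal - 1)),
    abs_of_nonneg (by positivity : 0 ≤ ‖x‖ ^ (q.toReal - 1))]
  gcongr
  refine mul_le_of_le_one_left (by positivity) ?_
  rcases (SignType.sign (x j)).trichotomy with h | h | h <;> simp [h]

lemma norm_normingCoeff_rpow_le (hpq : p.toReal.HolderConjugate q.toReal) (x : ℓ^q(α, ℝ))
    (j : α) : ‖normingCoeff x j‖ ^ p.toReal ≤ ‖x j‖ ^ q.toReal / ‖x‖ ^ q.toReal := by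
  calc ‖normingCoeff x j‖ ^ p.toReal
      ≤ (|x j| ^ (q.toReal - 1) / ‖x‖ ^ (q.toReal - 1)) ^ p.toReal := by
        gcongr
        exact abs_normingCoeff_le x j
    _ = ‖x j‖ ^ q.toReal / ‖x‖ ^ q.toReal := by
        rw [Real.div_rpow (by positivity) (by positivity), ← Real.rpow_mul (abs_nonneg _),
          ← Real.rpow_mul (norm_nonneg _), hpq.symm.sub_one_mul_conj, Real.norm_eq_abs]

lemma memℓp_normingCoeff (hpq : p.toReal.HolderConjugate q.toReal) (x : ℓ^q(α, ℝ)) :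
    Memℓp (normingCoeff x) p := by
  refine memℓp_gen (Summable.of_nonneg_of_le (fun _ => by positivity)
    (norm_normingCoeff_rpow_le hpq x) ?_)
  exact ((lp.memℓp x).summable hpq.symm.pos).div_const _

def normingDual (hpq : p.toReal.HolderConjugate q.toReal) (x : ℓ^q(α, ℝ)) : ℓ^p(α, ℝ) :=
  ⟨normingCoeff x, memℓp_normingCoeff hpq x⟩

lemma norm_normingDual_le (hpq : p.toReal.HolderConjugate q.toReal) (x : ℓ^q(α, ℝ)) :
    ‖normingDual hpq x‖ ≤ 1 := by
  refine lp.norm_le_of_tsum_le hpq.pos zero_le_one ?_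
  calc ∑' j, ‖normingCoeff x j‖ ^ p.toReal
      ≤ ∑' j, ‖x j‖ ^ q.toReal / ‖x‖ ^ q.toReal :=
        Summable.tsum_le_tsum (norm_normingCoeff_rpow_le hpq x)
          ((memℓp_normingCoeff hpq x).summable hpq.pos)
          (((lp.memℓp x).summable hpq.symm.pos).div_const _)
    _ = ‖x‖ ^ q.toReal / ‖x‖ ^ q.toReal := by
        rw [tsum_div_const, lp.norm_rpow_eq_tsum hpq.symm.pos]
    _ ≤ 1 ^ p.toReal := by rw [Real.one_rpow]; exact div_self_le_one _

variable [Fact (1 ≤ p)]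

def normingFunctional (hpq : p.toReal.HolderConjugate q.toReal) (x : ℓ^q(α, ℝ)) :
    ℓ^q(α, ℝ) →L[ℝ] ℝ :=
  haveI := ENNReal.HolderConjugate.of_toReal hpq
  lp.dualPairing p q (fun _ => ContinuousLinearMap.mul ℝ ℝ) (K := 1)
    (fun _ => ContinuousLinearMap.opNorm_mul_le ℝ ℝ) (normingDual hpq x)

lemma normingFunctional_apply (hpq : p.toReal.HolderConjugate q.toReal) (x y : ℓ^q(α, ℝ)) :
    normingFunctional hpq x y = ∑' j, normingCoeff x j * y j :=
  rfl

lemma norm_normingFunctional_le (hpq : p.toReal.HolderConjugate q.toReal) (x : ℓ^q(α, ℝ)) :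
    ‖normingFunctional hpq x‖ ≤ 1 := by
  have := ENNReal.HolderConjugate.of_toReal hpq
  calc ‖normingFunctional hpq x‖
      ≤ ‖lp.dualPairing p q (fun _ => ContinuousLinearMap.mul ℝ ℝ) (K := 1)
          (fun _ => ContinuousLinearMap.opNorm_mul_le ℝ ℝ)‖ * ‖normingDual hpq x‖ :=
        ContinuousLinearMap.le_opNorm _ _
    _ ≤ 1 * 1 := by
        gcongr
        · exact_mod_cast lp.norm_dualPairing _ _
        · exact norm_normingDual_le hpq x
    _ = 1 := one_mul 1

lemma normingFunctional_self (hpq : p.toReal.HolderConjugate q.toReal) (x : ℓ^q(α, ℝ)) :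
    normingFunctional hpq x x = ‖x‖ := by
  have hq := hpq.symm
  rcases eq_or_ne x 0 with rfl | hx
  · simp [normingFunctional_apply]
  have hterm : ∀ j, normingCoeff x j * x j = ‖x j‖ ^ q.toReal / ‖x‖ ^ (q.toReal - 1) := by
    intro j
    rw [normingCoeff, div_mul_eq_mul_div, mul_right_comm, sign_mul_self, Real.norm_eq_abs,
      ← Real.rpow_one_add' (abs_nonneg _) (by linarith [hq.lt]), add_sub_cancel]
  rw [normingFunctional_apply, tsum_congr hterm, tsum_div_const,
    ← lp.norm_rpow_eq_tsum hq.pos, ← Real.rpow_sub (norm_pos_iff.2 hx), sub_sub_cancel,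
    Real.rpow_one]

lemma normingFunctional_single (hpq : p.toReal.HolderConjugate q.toReal) (x : ℓ^q(α, ℝ))
    [DecidableEq α] (j : α) (c : ℝ) :
    normingFunctional hpq x (lp.single q j c) = normingCoeff x j * c := by
  rw [normingFunctional_apply, tsum_eq_single j fun k hk => by simp [hk]]
  simp

end NormingFunctional

end lp

section Realization

variable {q : ℝ≥0∞} [Fact (1 ≤ q)]

lemma mul_sSup_le_normingFunctional_single {α : Type} [DecidableEq α] {p : ℝ≥0∞}
    [Fact (1 ≤ p)] (hpq : p.toReal.HolderConjugate q.toReal) (x : ℓ^q(α, ℝ))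
    (hx : ∀ j, |x j| ≤ 1) {j : α} (hxj : 0 ≤ x j) {τ : ℝ} (hτ : 0 ≤ τ)
    (hτj : τ ≤ x j ^ (q.toReal - 1)) :
    τ * sSup ((fun g => lp.normingFunctional hpq x g) '' lp.signedBasis α q) ≤
      lp.normingFunctional hpq x (lp.single q j 1) := by
  have hsSup : sSup ((fun g => lp.normingFunctional hpq x g) '' lp.signedBasis α q) ≤
      1 / ‖x‖ ^ (q.toReal - 1) := by
    refine lp.sSup_image_signedBasis_le _ (by positivity) fun k => ?_
    rw [lp.normingFunctional_single, mul_one]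
    refine (lp.abs_normingCoeff_le x k).trans ?_
    gcongr
    exact Real.rpow_le_one (abs_nonneg _) (hx k) (sub_nonneg.2 hpq.symm.lt.le)
  calc τ * sSup ((fun g => lp.normingFunctional hpq x g) '' lp.signedBasis α q)
      ≤ τ * (1 / ‖x‖ ^ (q.toReal - 1)) := mul_le_mul_of_nonneg_left hsSup hτ
    _ ≤ x j ^ (q.toReal - 1) / ‖x‖ ^ (q.toReal - 1) := by
        rw [mul_one_div]
        gcongr
    _ = lp.normingFunctional hpq x (lp.single q j 1) := by
        rw [lp.normingFunctional_single, mul_one, lp.normingCoeff_of_nonneg hpq.symm.lt x hxj]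

theorem exists_awcgaRealization_signedBasis (hq : 1 < q.toReal) (f : ℓ^q(ℕ, ℝ))
    (hf : ∀ j, 0 ≤ f j ∧ f j ≤ 1) {t δ η : ℕ → ℝ} (ht : IsWeaknessSeq t)
    (hδ : IsPerturbationSeq δ) (hη : IsErrorSeq η)
    (ht_le : ∀ n, t (n + 1) ≤ f (n + 1) ^ (q.toReal - 1)) :
    ∃ r : AWCGARealization (lp.signedBasis ℕ q) f t δ η,
      ∀ n, r.fs n = f - ∑ j ∈ Finset.Icc 1 n, lp.single q j (f j) := by
  have hconj := (Real.HolderConjugate.conjExponent hq).symm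
  set p := ENNReal.ofReal q.toReal.conjExponent
  have hpq : p.toReal.HolderConjugate q.toReal := by rwa [ENNReal.toReal_ofReal hconj.nonneg]
  have : Fact (1 ≤ p) := ⟨ENNReal.one_le_ofReal.2 hconj.lt.le⟩
  set res : ℕ → ℓ^q(ℕ, ℝ) := fun n => f - ∑ j ∈ Finset.Icc 1 n, lp.single q j (f j)
  have hres_le : ∀ n j, |res n j| ≤ 1 := fun n j => by
    simp only [res, lp.sub_sum_single_apply]
    split_ifs
    · simp
    · exact abs_le.2 ⟨by linarith [(hf j).1], (hf j).2⟩
  have hres_succ : ∀ n, res n (n + 1) = f (n + 1) := fun n => by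
    simp [res, lp.sub_sum_single_apply]
  have happrox := lp.norm_sub_sum_single_Icc_le_approxError f
  refine ⟨{
    F := fun n => lp.normingFunctional hpq (res n)
    φ := fun j => lp.single q j 1
    G := fun n => ∑ j ∈ Finset.Icc 1 n, lp.single q j (f j)
    fs := res
    fs_zero := by simp [res]
    F_norm := fun n => lp.norm_normingFunctional_le hpq (res n)
    F_norming := fun n => by
      rw [lp.normingFunctional_self]
      exact mul_le_of_le_one_left (norm_nonneg _) (by linarith [(hδ n).1])
    φ_mem := fun n => ⟨n + 1, Or.inl rfl⟩
    φ_greedy := fun n =>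
      mul_sSup_le_normingFunctional_single hpq _ (hres_le n)
        ((hres_succ n).symm ▸ (hf _).1) (ht (n + 1) n.succ_pos).1 ((hres_succ n).symm ▸ ht_le n)
    G_mem := fun n => Submodule.sum_mem _ fun j hj => by
      rw [lp.single_eq_smul_single_one]
      exact Submodule.smul_mem _ _ (Submodule.subset_span ⟨j, by simpa using hj, rfl⟩)
    G_near := fun n => (happrox (n + 1)).trans
      (le_mul_of_one_le_left ((norm_nonneg _).trans (happrox (n + 1)))
        (by linarith [hη (n + 1) n.succ_pos]))
    fs_succ := fun n => rfl }, fun n => rfl⟩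

end Realization

section Counterexample

variable {p q : ℝ} {t : ℕ → ℝ}

def counterexampleCoeff (p : ℝ) (t : ℕ → ℝ) (j : ℕ) : ℝ :=
  if j = 0 then 1 else t j ^ (p - 1)

lemma counterexampleCoeff_mem_Icc (ht : IsWeaknessSeq t) (hp : 1 ≤ p) (j : ℕ) :
    0 ≤ counterexampleCoeff p t j ∧ counterexampleCoeff p t j ≤ 1 := by
  unfold counterexampleCoeff
  split_ifs with hj
  · exact ⟨zero_le_one, le_rfl⟩
  · obtain ⟨h0, h1⟩ := ht j (Nat.one_le_iff_ne_zero.2 hj)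
    exact ⟨Real.rpow_nonneg h0 _, Real.rpow_le_one h0 h1 (sub_nonneg.2 hp)⟩

lemma counterexampleCoeff_succ_rpow (ht : IsWeaknessSeq t) (hqp : q.HolderConjugate p) (n : ℕ) :
    counterexampleCoeff p t (n + 1) ^ (q - 1) = t (n + 1) := by
  rw [counterexampleCoeff, if_neg n.succ_ne_zero, ← Real.rpow_mul (ht (n + 1) n.succ_pos).1]
  have : (p - 1) * (q - 1) = 1 := by linarith [hqp.mul_eq_add]
  rw [this, Real.rpow_one]

lemma memℓp_counterexampleCoeff (ht : IsWeaknessSeq t) (hqp : q.HolderConjugate p)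
    (htsum : Summable fun m => t (m + 1) ^ p) :
    Memℓp (counterexampleCoeff p t) (ENNReal.ofReal q) := by
  refine memℓp_gen ?_
  rw [ENNReal.toReal_ofReal hqp.nonneg, ← summable_nat_add_iff 1]
  refine htsum.congr fun m => ?_
  rw [Real.norm_eq_abs, abs_of_nonneg (counterexampleCoeff_mem_Icc ht hqp.symm.lt.le _).1,
    counterexampleCoeff, if_neg m.succ_ne_zero, ← Real.rpow_mul (ht (m + 1) m.succ_pos).1,
    hqp.symm.sub_one_mul_conj]

end Counterexample

theorem stmt_5_general (q p : ℝ) [Fact (1 ≤ ENNReal.ofReal q)] (hq1 : 1 < q)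
    (hp : p = q / (q - 1))
    (t δ η : ℕ → ℝ) (ht : IsWeaknessSeq t) (hδ : IsPerturbationSeq δ)
    (hη : IsErrorSeq η)
    (htsum : Summable (fun m => t (m + 1) ^ p)) :
    ∃ D : Set (ellq q), IsDictionary D ∧
      ∃ (f : ellq q) (r : AWCGARealization D f t δ η),
        ¬ Tendsto (fun m => ‖r.fs m‖) atTop (nhds 0) := by
  have hqp : q.HolderConjugate p := (Real.holderConjugate_iff_eq_conjExponent hq1).2 hp
  have hq : (ENNReal.ofReal q).toReal = q := ENNReal.toReal_ofReal hqp.nonneg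
  let f : ellq q := ⟨counterexampleCoeff p t, memℓp_counterexampleCoeff ht hqp htsum⟩
  obtain ⟨r, hr⟩ := exists_awcgaRealization_signedBasis (by rwa [hq]) f
    (counterexampleCoeff_mem_Icc ht hqp.symm.lt.le) ht hδ hη
    fun n => (hq ▸ counterexampleCoeff_succ_rpow ht hqp n).ge
  refine ⟨_, lp.isDictionary_signedBasis ENNReal.ofReal_ne_top, f, r, fun hlim => ?_⟩
  have hnorm : ∀ n, 1 ≤ ‖r.fs n‖ := fun n => by
    have h0 : r.fs n 0 = 1 := by
      rw [hr, lp.sub_sum_single_apply, if_neg (by simp)]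
      simp [f, counterexampleCoeff]
    simpa [h0] using lp.norm_apply_le_norm (zero_lt_one.trans_le Fact.out).ne' (r.fs n) 0
  linarith [ge_of_tendsto' hlim hnorm]

/-- Divergence of the AWCGA when `∑ t_n^p < ∞` and `(δ_n), (η_n) ∈ ℓ₁`. -/
theorem stmt_5 (q p : ℝ) [Fact (1 ≤ ENNReal.ofReal q)] (hq1 : 1 < q) (hq2 : q ≤ 2)
    (hp : p = q / (q - 1))
    (t δ η : ℕ → ℝ) (ht : IsWeaknessSeq t) (hδ : IsPerturbationSeq δ)
    (hη : IsErrorSeq η)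
    (htsum : Summable (fun m => t (m + 1) ^ p))
    (hδsum : Summable δ)
    (hηsum : Summable (fun m => η (m + 1))) :
    ∃ D : Set (ellq q), IsDictionary D ∧
      ∃ (f : ellq q) (r : AWCGARealization D f t δ η),
        ¬ Tendsto (fun m => ‖r.fs m‖) atTop (nhds 0) :=
  stmt_5_general q p hq1 hp t δ η ht hδ hη htsum
end
end

section
/- Let X be a real Banach space that is not smooth, i.e., there exists a nonzero element of X admitting two distinct norming functionals. Then there exist a dictionary D in X and an element f that is a finite linear combination of elements of D such that, for every weakness sequence (t_n)_{n≥1}, there is a realization of the WCGA of f (with respect to D and (t_n)) in which f_n = f for all n; in particular ‖f_n‖ does not tend to 0. -/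
open Filter

noncomputable section

variable {X : Type} [NormedAddCommGroup X] [NormedSpace ℝ X]

/-- A realization of the WCGA of `f` with respect to a dictionary `D`
and a weakness sequence `t`. -/
structure WCGARealization (D : Set X) (f : X) (t : ℕ → ℝ) where
  F : ℕ → (X →L[ℝ] ℝ)
  φ : ℕ → X
  G : ℕ → X
  fs : ℕ → X
  fs_zero : fs 0 = f
  F_norm : ∀ n : ℕ, ‖F n‖ = 1
  F_norming : ∀ n : ℕ, F n (fs n) = ‖fs n‖
  φ_mem : ∀ n : ℕ, φ (n + 1) ∈ D
  φ_greedy : ∀ n : ℕ, F n (φ (n + 1)) ≥ t (n + 1) * sSup ((fun g => F n g) '' D)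
  G_mem : ∀ n : ℕ, G (n + 1) ∈ Submodule.span ℝ (φ '' Set.Icc 1 (n + 1))
  G_best : ∀ n : ℕ, ‖f - G (n + 1)‖ = approxError f φ (n + 1)
  fs_succ : ∀ n : ℕ, fs (n + 1) = f - G (n + 1)

/-- In a nonsmooth Banach space the WCGA can fail to converge even for
finite linear combinations of dictionary elements. -/
theorem stmt_6 {X : Type} [NormedAddCommGroup X] [NormedSpace ℝ X] [CompleteSpace X]
    (hns : ∃ f : X, f ≠ 0 ∧ ∃ F F' : X →L[ℝ] ℝ,
      ‖F‖ = 1 ∧ F f = ‖f‖ ∧ ‖F'‖ = 1 ∧ F' f = ‖f‖ ∧ F ≠ F') :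
    ∃ D : Set X, IsDictionary D ∧
      ∃ f : X, f ∈ Submodule.span ℝ D ∧
        ∀ t : ℕ → ℝ, IsWeaknessSeq t →
          ∃ r : WCGARealization D f t,
            (∀ m : ℕ, r.fs m = f) ∧ ¬ Tendsto (fun m => ‖r.fs m‖) atTop (nhds 0) := by
  obtain ⟨f, hf0, F, F', hF1, hFf, hF'1, hF'f, hFF'⟩ := hns
  have hfn : ‖f‖ ≠ 0 := norm_ne_zero_iff.mpr hf0
  -- an x with F x ≠ F' x
  obtain ⟨x, hx⟩ : ∃ x, F x ≠ F' x := by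
    by_contra h
    push_neg at h
    exact hFF' (ContinuousLinearMap.ext h)
  set fhat : X := ‖f‖⁻¹ • f with hfhat
  have hFfhat : F fhat = 1 := by
    simp [hfhat, hFf, inv_mul_cancel₀ hfn]
  have hF'fhat : F' fhat = 1 := by
    simp [hfhat, hF'f, inv_mul_cancel₀ hfn]
  set e0 : X := x - (F x) • fhat with he0
  have hFe0 : F e0 = 0 := by simp [he0, hFfhat]
  have hF'e0 : F' e0 = F' x - F x := by simp [he0, hF'fhat]
  have hF'e0ne : F' e0 ≠ 0 := by rw [hF'e0]; exact sub_ne_zero.mpr (Ne.symm hx)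
  set e : X := (F' e0)⁻¹ • e0 with he
  have hFe : F e = 0 := by simp [he, hFe0]
  have hF'e : F' e = 1 := by simp [he, inv_mul_cancel₀ hF'e0ne]
  have hene : e ≠ 0 := by
    intro h; rw [h] at hF'e; simp at hF'e
  set w : X := fhat - e with hw
  have hFw : F w = 1 := by simp [hw, hFfhat, hFe]
  have hF'w : F' w = 0 := by simp [hw, hF'fhat, hF'e]
  have hwne : w ≠ 0 := by
    intro h; rw [h] at hFw; simp at hFw
  have hwn : ‖w‖ ≠ 0 := norm_ne_zero_iff.mpr hwne
  have hwpos : (0:ℝ) < ‖w‖ := norm_pos_iff.mpr hwne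
  set φ0 : X := ‖w‖⁻¹ • w with hφ0
  have hφ0norm : ‖φ0‖ = 1 := by
    rw [hφ0, norm_smul, norm_inv, norm_norm, inv_mul_cancel₀ hwn]
  set α : ℝ := ‖w‖⁻¹ with hα
  have hαpos : (0:ℝ) < α := inv_pos.mpr hwpos
  have hFφ0 : F φ0 = α := by simp [hφ0, hFw, hα]
  have hF'φ0 : F' φ0 = 0 := by simp [hφ0, hF'w]
  set D : Set X := {g | ‖g‖ = 1 ∧ |F g| ≤ α} with hD
  have hφ0D : φ0 ∈ D := ⟨hφ0norm, by rw [hFφ0, abs_of_pos hαpos]⟩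
  -- kernel elements of norm 1 are in D
  have hker : ∀ k : X, F k = 0 → k ∈ Submodule.span ℝ D := by
    intro k hk
    rcases eq_or_ne k 0 with rfl | hkne
    · exact Submodule.zero_mem _
    · have hknorm : ‖k‖ ≠ 0 := norm_ne_zero_iff.mpr hkne
      have : (‖k‖⁻¹ • k) ∈ D := by
        constructor
        · rw [norm_smul, norm_inv, norm_norm, inv_mul_cancel₀ hknorm]
        · simp [hk]; positivity
      have h2 : (‖k‖ : ℝ) • (‖k‖⁻¹ • k) ∈ Submodule.span ℝ D :=
        Submodule.smul_mem _ _ (Submodule.subset_span this)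
      rwa [smul_smul, mul_inv_cancel₀ hknorm, one_smul] at h2
  have hwspan : w ∈ Submodule.span ℝ D := by
    have : (‖w‖ : ℝ) • φ0 ∈ Submodule.span ℝ D :=
      Submodule.smul_mem _ _ (Submodule.subset_span hφ0D)
    rwa [hφ0, smul_smul, mul_inv_cancel₀ hwn, one_smul] at this
  have hspan : Submodule.span ℝ D = ⊤ := by
    rw [eq_top_iff]
    intro y _
    have hdecomp : y = (F y) • w + (y - (F y) • w) := by abel
    have hk : F (y - (F y) • w) = 0 := by simp [hFw]
    rw [hdecomp]
    exact Submodule.add_mem _ (Submodule.smul_mem _ _ hwspan) (hker _ hk)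
  have hDdict : IsDictionary D := by
    refine ⟨fun g hg => hg.1, fun g hg => ⟨by simpa using hg.1, by simpa using hg.2⟩, ?_⟩
    rw [hspan]
    exact le_antisymm le_top (Submodule.le_topologicalClosure ⊤)
  have hfspan : f ∈ Submodule.span ℝ D := by
    have hfe : f = ‖f‖ • w + ‖f‖ • e := by
      rw [hw, smul_sub, sub_add_cancel, hfhat, smul_smul, mul_inv_cancel₀ hfn, one_smul]
    rw [hfe]
    exact Submodule.add_mem _ (Submodule.smul_mem _ _ hwspan)
      (Submodule.smul_mem _ _ (hker e hFe))
  refine ⟨D, hDdict, f, hfspan, ?_⟩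
  intro t ht
  -- sSup of F over D is α
  have hsup : sSup ((fun g => F g) '' D) = α := by
    apply le_antisymm
    · refine csSup_le ⟨F φ0, ⟨φ0, hφ0D, rfl⟩⟩ ?_
      rintro b ⟨g, hg, rfl⟩
      exact le_trans (le_abs_self _) hg.2
    · exact le_csSup ⟨α, by rintro b ⟨g, hg, rfl⟩; exact le_trans (le_abs_self _) hg.2⟩
        ⟨φ0, hφ0D, hFφ0⟩
  -- the approximation error from span{φ0} is ‖f‖
  have herr : ∀ n : ℕ, approxError f (fun _ => φ0) (n + 1) = ‖f‖ := by
    intro n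
    have himg : (fun _ : ℕ => φ0) '' Set.Icc 1 (n + 1) = {φ0} :=
      Set.Nonempty.image_const ⟨1, by simp⟩ _
    rw [approxError, himg]
    apply le_antisymm
    · apply csInf_le
      · refine ⟨0, ?_⟩
        rintro b ⟨g, _, rfl⟩
        exact norm_nonneg _
      · exact ⟨0, Submodule.zero_mem _, by simp⟩
    · refine le_csInf ⟨‖f - (0:X)‖, ⟨0, Submodule.zero_mem _, rfl⟩⟩ ?_
      rintro b ⟨g, hg, rfl⟩
      obtain ⟨a, rfl⟩ := Submodule.mem_span_singleton.mp hg
      have : F' (f - a • φ0) = ‖f‖ := by simp [hF'f, hF'φ0]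
      calc ‖f‖ = F' (f - a • φ0) := this.symm
        _ ≤ ‖F' (f - a • φ0)‖ := le_abs_self _
        _ ≤ ‖F'‖ * ‖f - a • φ0‖ := ContinuousLinearMap.le_opNorm _ _
        _ = ‖f - a • φ0‖ := by rw [hF'1, one_mul]
  refine ⟨⟨fun _ => F, fun _ => φ0, fun _ => 0, fun _ => f, rfl, fun _ => hF1,
    fun _ => hFf, fun _ => hφ0D, ?_, fun _ => Submodule.zero_mem _, ?_, fun _ => by simp⟩,
    fun _ => rfl, ?_⟩
  · intro n
    rw [hsup, hFφ0]
    calc t (n + 1) * α ≤ 1 * α :=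
          mul_le_mul_of_nonneg_right (ht (n + 1) (by omega)).2 hαpos.le
      _ = α := one_mul α
  · intro n
    rw [herr n]; simp
  · intro h
    exact hfn (tendsto_nhds_unique tendsto_const_nhds h)
end
end

section
/- Let (a_n)_{n≥1} and (b_n)_{n≥1} be nonnegative real sequences such that ∑_{n=1}^∞ b_n = ∞ and a_n = o(b_{n−1}) as n → ∞. Then there exists a strictly increasing sequence of indices (n_k)_{k≥1} such that ∑_{k=1}^∞ b_{n_k} = ∞ and a_{n_k} = o(b_{n_k}) as k → ∞. -/
open Filter

/-!
Call `j` a slow step of `b` if `b j ≤ 2 b_{j+1}`. Across a run of fast steps `b` more than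
halves at each step, so the whole series is dominated by twice the sum of `b_{j+1}` over the slow
steps `j` (plus `b_0`); hence those terms still diverge. Taking `n_k = j_k + 1` for the `k`-th
slow step `j_k`, eventually `a_{n_k} ≤ ε b_{j_k} ≤ 2 ε b_{n_k}`.
-/

def slowSteps (b : ℕ → ℝ) : Set ℕ := {j | b j ≤ 2 * b (j + 1)}

theorem sum_range_add_le_sum_slowSteps (b : ℕ → ℝ) (hb : ∀ m, 0 ≤ b m) (n : ℕ) :
    ∑ i ∈ Finset.range (n + 1), b i + b n ≤
      2 * (b 0 + ∑ j ∈ Finset.range n, (slowSteps b).indicator (fun j => b (j + 1)) j) := by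
  induction n with
  | zero => rw [Finset.sum_range_one, Finset.sum_range_zero]; linarith
  | succ n ih =>
    rw [Finset.sum_range_succ b,
      Finset.sum_range_succ (fun j => (slowSteps b).indicator (fun j => b (j + 1)) j) n]
    by_cases hslow : n ∈ slowSteps b
    · rw [Set.indicator_of_mem hslow]
      linarith [hb n]
    · rw [Set.indicator_of_notMem hslow]
      have : 2 * b (n + 1) < b n := not_le.mp hslow
      linarith

theorem summable_of_summable_slowSteps (b : ℕ → ℝ) (hb : ∀ m, 0 ≤ b m)
    (hslow : Summable ((slowSteps b).indicator fun j => b (j + 1))) :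
    Summable b := by
  refine summable_of_sum_range_le hb
    (c := 2 * (b 0 + ∑' j, (slowSteps b).indicator (fun j => b (j + 1)) j)) fun n => ?_
  have hsum := sum_range_add_le_sum_slowSteps b hb n
  have hpartial := hslow.sum_le_tsum (Finset.range n) fun j _ =>
    Set.indicator_nonneg (fun j _ => hb (j + 1)) j
  rw [Finset.sum_range_succ] at hsum
  linarith [hb n]

theorem not_summable_comp_nth {α : Type*} [AddCommMonoid α] [TopologicalSpace α]
    {S : Set ℕ} {f : ℕ → α} (hf : ¬ Summable (S.indicator f)) :
    S.Infinite ∧ ¬ Summable (f ∘ Nat.nth (· ∈ S)) := by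
  have hinf : S.Infinite := fun hfin =>
    hf (summable_of_hasFiniteSupport (hfin.subset Set.support_indicator_subset))
  refine ⟨hinf, fun hs => hf ?_⟩
  have hrange : Set.range (Nat.nth (· ∈ S)) = S := Nat.range_nth_of_infinite hinf
  have hvanish : ∀ j ∉ Set.range (Nat.nth (· ∈ S)), S.indicator f j = 0 := fun j hj =>
    Set.indicator_of_notMem (fun hjS => hj (hrange.ge hjS)) f
  refine ((Nat.nth_strictMono hinf).injective.summable_iff hvanish).mp ?_
  convert hs using 1
  funext k
  exact Set.indicator_of_mem (Nat.nth_mem_of_infinite hinf k) f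

theorem stmt_7_general (a b : ℕ → ℝ) (hb : ∀ m, 0 ≤ b m)
    (hbsum : ¬ Summable b)
    (hao : ∀ ε : ℝ, 0 < ε → ∃ N, ∀ m, N ≤ m → a (m + 1) ≤ ε * b m) :
    ∃ n : ℕ → ℕ, StrictMono n ∧ (¬ Summable (fun k => b (n k))) ∧
      IsLittleO (fun k => a (n k)) (fun k => b (n k)) := by
  obtain ⟨hinf, hdiv⟩ := not_summable_comp_nth (mt (summable_of_summable_slowSteps b hb) hbsum)
  set j := Nat.nth (· ∈ slowSteps b)
  have hj : StrictMono j := Nat.nth_strictMono hinf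
  refine ⟨fun k => j k + 1, fun _ _ hlt => Nat.succ_lt_succ (hj hlt), hdiv, fun ε hε => ?_⟩
  obtain ⟨N, hN⟩ := hao (ε / 2) (half_pos hε)
  refine ⟨N, fun k hk => ?_⟩
  have hslow : b (j k) ≤ 2 * b (j k + 1) := Nat.nth_mem_of_infinite hinf k
  calc a (j k + 1) ≤ ε / 2 * b (j k) := hN _ (hk.trans hj.le_apply)
    _ ≤ ε / 2 * (2 * b (j k + 1)) := by gcongr
    _ = ε * b (j k + 1) := by ring

/-- If `∑ b_n = ∞` and `a_n = o(b_{n-1})`, then along some subsequence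
`∑ b_{n_k} = ∞` and `a_{n_k} = o(b_{n_k})`. -/
theorem stmt_7 (a b : ℕ → ℝ) (ha : ∀ m, 0 ≤ a m) (hb : ∀ m, 0 ≤ b m)
    (hbsum : ¬ Summable b)
    (hao : ∀ ε : ℝ, 0 < ε → ∃ N, ∀ m, N ≤ m → a (m + 1) ≤ ε * b m) :
    ∃ n : ℕ → ℕ, StrictMono n ∧ (¬ Summable (fun k => b (n k))) ∧
      IsLittleO (fun k => a (n k)) (fun k => b (n k)) :=
  stmt_7_general a b hb hbsum hao
end

section
/- Let (a_n)_{n≥1} and (b_n)_{n≥1} be nonnegative real sequences such that ∑_{n=1}^∞ a_n < ∞ and ∑_{n=1}^∞ b_n = ∞. Then there exists a strictly increasing sequence of indices (n_k)_{k≥1} such that ∑_{k=1}^∞ b_{n_k} = ∞ and a_{n_k} = o(b_{n_k}) as k → ∞. -/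
/-!
Let `T m = ∑_{k ≥ m} a k` be the tails of `∑ a`, so `√(T m) → 0`. Keep the indices with
`a m ≤ √(T m) * b m`; along them `a = o(b)`. At every other index
`√(T m) * b m < a m = T m - T (m + 1) ≤ 2 √(T m) (√(T m) - √(T (m + 1)))`, so there `b m` is bounded
by a telescoping series with nonnegative terms. Hence the discarded indices carry only a finite
part of `∑ b`, and the kept ones still carry an infinite part.
-/

open Filter

open Topology

theorem sub_le_two_mul_sqrt_mul_sqrt_sub {x y : ℝ} (hy : 0 ≤ y) (hyx : y ≤ x) :
    x - y ≤ 2 * √x * (√x - √y) := by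
  have hxy : √y ≤ √x := Real.sqrt_le_sqrt hyx
  nlinarith [Real.sq_sqrt hy, Real.sq_sqrt (hy.trans hyx), Real.sqrt_nonneg y]

theorem Antitone.summable_sub_succ {f : ℕ → ℝ} (hf : Antitone f) (hf0 : ∀ n, 0 ≤ f n) :
    Summable fun n => f n - f (n + 1) :=
  summable_of_sum_range_le (c := f 0) (fun n => sub_nonneg.2 (hf n.le_succ))
    fun n => by rw [Finset.sum_range_sub']; linarith [hf0 n]

theorem exists_strictMono_mem_not_summable {b : ℕ → ℝ} {S : Set ℕ}
    (hS : ¬ Summable (S.indicator b)) :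
    ∃ n : ℕ → ℕ, StrictMono n ∧ (∀ k, n k ∈ S) ∧ ¬ Summable fun k => b (n k) := by
  have hinf : S.Infinite := fun hfin =>
    hS (summable_of_hasFiniteSupport (hfin.subset Set.support_indicator_subset))
  refine ⟨Nat.nth (· ∈ S), Nat.nth_strictMono hinf, Nat.nth_mem_of_infinite hinf, fun h => hS ?_⟩
  rw [← (Nat.nth_strictMono hinf).injective.summable_iff fun m hm =>
    Set.indicator_of_notMem (by rwa [Nat.range_nth_of_infinite hinf] at hm) b]
  convert h using 2 with k
  exact Set.indicator_of_mem (Nat.nth_mem_of_infinite hinf k) b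

theorem not_summable_indicator_of_le_off {b g : ℕ → ℝ} {S : Set ℕ} (hb : ∀ m, 0 ≤ b m)
    (hbsum : ¬ Summable b) (hg : Summable g) (hbg : ∀ m ∉ S, b m ≤ g m) :
    ¬ Summable (S.indicator b) := by
  have hcompl : Summable (Sᶜ.indicator b) := by
    refine (hg.indicator Sᶜ).of_nonneg_of_le (Set.indicator_nonneg fun m _ => hb m) fun m => ?_
    by_cases hm : m ∈ S
    · simp [hm]
    · simpa [hm] using hbg m hm
  intro hS
  exact hbsum (Set.indicator_self_add_compl S b ▸ hS.add hcompl)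

theorem exists_strictMono_not_summable_isLittleO {a b ε g : ℕ → ℝ} (hb : ∀ m, 0 ≤ b m)
    (hbsum : ¬ Summable b) (hε : Tendsto ε atTop (𝓝 0)) (hg : Summable g)
    (hbg : ∀ m, ε m * b m < a m → b m ≤ g m) :
    ∃ n : ℕ → ℕ, StrictMono n ∧ (¬ Summable fun k => b (n k)) ∧
      IsLittleO (fun k => a (n k)) (fun k => b (n k)) := by
  obtain ⟨n, hn, hnS, hnsum⟩ := exists_strictMono_mem_not_summable
    (not_summable_indicator_of_le_off hb hbsum hg (S := {m | a m ≤ ε m * b m})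
      fun m hm => hbg m (not_le.1 hm))
  refine ⟨n, hn, hnsum, fun δ hδ => ?_⟩
  obtain ⟨N, hN⟩ := eventually_atTop.1 <|
    (hε.comp hn.tendsto_atTop).eventually (eventually_le_nhds hδ)
  exact ⟨N, fun k hk => (hnS k).trans (mul_le_mul_of_nonneg_right (hN k hk) (hb _))⟩

section TailSum

variable {a : ℕ → ℝ}

theorem tsum_nat_add_eq_add_tsum_nat_add_succ (hasum : Summable a) (m : ℕ) :
    ∑' k, a (k + m) = a m + ∑' k, a (k + (m + 1)) := by
  rw [((summable_nat_add_iff m).2 hasum).tsum_eq_zero_add, zero_add]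
  simp only [add_right_comm _ 1 m, add_assoc]

theorem antitone_tsum_nat_add (ha : ∀ m, 0 ≤ a m) (hasum : Summable a) :
    Antitone fun m => ∑' k, a (k + m) :=
  antitone_nat_of_succ_le fun m => by
    rw [tsum_nat_add_eq_add_tsum_nat_add_succ hasum m]; linarith [ha m]

theorem le_two_mul_sqrt_tsum_nat_add_sub_of_sqrt_mul_lt (ha : ∀ m, 0 ≤ a m)
    (hasum : Summable a) {b : ℝ} {m : ℕ} (h : √(∑' k, a (k + m)) * b < a m) :
    b ≤ 2 * (√(∑' k, a (k + m)) - √(∑' k, a (k + (m + 1)))) := by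
  have hdiff :
      a m ≤ √(∑' k, a (k + m)) * (2 * (√(∑' k, a (k + m)) - √(∑' k, a (k + (m + 1))))) :=
    calc a m = ∑' k, a (k + m) - ∑' k, a (k + (m + 1)) := by
          rw [tsum_nat_add_eq_add_tsum_nat_add_succ hasum m]; ring
      _ ≤ _ := (sub_le_two_mul_sqrt_mul_sqrt_sub (tsum_nonneg fun k => ha (k + (m + 1)))
          (antitone_tsum_nat_add ha hasum m.le_succ)).trans_eq (by ring)
  exact (lt_of_mul_lt_mul_left (h.trans_le hdiff) (Real.sqrt_nonneg _)).le

end TailSum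

/-- If `∑ a_n < ∞` and `∑ b_n = ∞`, then along some subsequence
`∑ b_{n_k} = ∞` and `a_{n_k} = o(b_{n_k})`. -/
theorem stmt_8 (a b : ℕ → ℝ) (ha : ∀ m, 0 ≤ a m) (hb : ∀ m, 0 ≤ b m)
    (hasum : Summable a) (hbsum : ¬ Summable b) :
    ∃ n : ℕ → ℕ, StrictMono n ∧ (¬ Summable (fun k => b (n k))) ∧
      IsLittleO (fun k => a (n k)) (fun k => b (n k)) := by
  have hsqrt : Tendsto (fun m => √(∑' k, a (k + m))) atTop (𝓝 0) := by
    simpa only [Real.sqrt_zero, Function.comp_def] using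
      (Real.continuous_sqrt.tendsto 0).comp (tendsto_sum_nat_add a)
  have htele : Summable fun m => 2 * (√(∑' k, a (k + m)) - √(∑' k, a (k + (m + 1)))) :=
    (Antitone.summable_sub_succ
      (fun _ _ h => Real.sqrt_le_sqrt (antitone_tsum_nat_add ha hasum h))
      fun _ => Real.sqrt_nonneg _).mul_left 2
  exact exists_strictMono_not_summable_isLittleO hb hbsum hsqrt htele
    fun m => le_two_mul_sqrt_tsum_nat_add_sub_of_sqrt_mul_lt ha hasum
end
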